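/- arXiv:1702.05423 — 7 statements merged into one kernel-verified Lean document; each statement's English description precedes it below -/
import Mathlib

section
/- Let (Ω, μ) be a probability space, A a real p×N matrix, b ∈ ℝ^p, F : ℝ^N → ℝ a convex (hence continuous) function, x ∈ ℝ^N, γ > 0, and φ : ℝ^p → ℝ a continuous function. Let x̂ : Ω → ℝ^N be measurable such that ω ↦ F(x̂(ω)) and ω ↦ ‖A x̂(ω) − b‖ are integrable. Assume that for every measurable map Λ : Ω → ℝ^p with ‖Λ(ω)‖ ≤ γ for all ω, one has ∫ (F(x̂(ω)) − F(x) − ⟨Λ(ω), A x̂(ω) − b⟩) dμ(ω) ≤ ∫ φ(Λ(ω)) dμ(ω). Then ∫ (F(x̂(ω)) − F(x) + γ‖A x̂(ω) − b‖) dμ(ω) ≤ sup_{λ ∈ ℝ^p, ‖λ‖ ≤ γ} φ(λ). -/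
/-!
Test the hypothesis against the pointwise maximiser of the dual pairing: with
`v ω = A x̂(ω) - b`, the multiplier `Λ ω = -(γ / ‖v ω‖) • v ω` has norm at most `γ` and
`-⟪Λ ω, v ω⟫ = γ ‖v ω‖`, so the left-hand side of the hypothesis becomes the integral to be
bounded. Since `φ ∘ Λ` takes values in the compact set `φ '' closedBall 0 γ`, its integral
against a probability measure is at most the supremum of that set.
-/

open MeasureTheory

theorem norm_div_norm_smul_le {E : Type*} [NormedAddCommGroup E] [NormedSpace ℝ E]
    {γ : ℝ} (hγ : 0 ≤ γ) (v : E) : ‖(γ / ‖v‖) • v‖ ≤ γ := by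
  rcases eq_or_ne v 0 with rfl | hv
  · simpa using hγ
  · rw [norm_smul, Real.norm_eq_abs, abs_div, abs_norm, abs_of_nonneg hγ,
      div_mul_cancel₀ _ (norm_ne_zero_iff.mpr hv)]

theorem real_inner_div_norm_smul_self {F : Type*} [NormedAddCommGroup F]
    [InnerProductSpace ℝ F] (γ : ℝ) (v : F) : inner ℝ ((γ / ‖v‖) • v) v = γ * ‖v‖ := by
  rw [real_inner_smul_left, real_inner_self_eq_norm_sq]
  rcases eq_or_ne ‖v‖ 0 with hv | hv
  · simp [hv]
  · field_simp

theorem integral_le_sSup_of_forall_mem {Ω : Type*} [MeasurableSpace Ω] {μ : Measure Ω}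
    [IsProbabilityMeasure μ] {f : Ω → ℝ} {S : Set ℝ} (hS : Bornology.IsBounded S)
    (hf : AEStronglyMeasurable f μ) (hfS : ∀ ω, f ω ∈ S) : ∫ ω, f ω ∂μ ≤ sSup S := by
  obtain ⟨C, hC⟩ := hS.exists_norm_le
  have hf_int : Integrable f μ := .of_bound hf C (.of_forall fun ω => hC _ (hfS ω))
  calc ∫ ω, f ω ∂μ ≤ ∫ _ω, sSup S ∂μ :=
        integral_mono hf_int (integrable_const _) fun ω => le_csSup hS.bddAbove (hfS ω)
    _ = sSup S := by simp

theorem stmt_0_general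
    {Ω : Type*} [MeasurableSpace Ω] (μ : Measure Ω) [IsProbabilityMeasure μ]
    {p N : ℕ}
    (A : EuclideanSpace ℝ (Fin N) →L[ℝ] EuclideanSpace ℝ (Fin p))
    (b : EuclideanSpace ℝ (Fin p))
    (F : EuclideanSpace ℝ (Fin N) → ℝ)
    (x : EuclideanSpace ℝ (Fin N)) (γ : ℝ) (hγ : 0 < γ)
    (φ : EuclideanSpace ℝ (Fin p) → ℝ) (hφ : Continuous φ)
    (xhat : Ω → EuclideanSpace ℝ (Fin N)) (hxhat : Measurable xhat)
    (h : ∀ Λ : Ω → EuclideanSpace ℝ (Fin p), Measurable Λ → (∀ ω, ‖Λ ω‖ ≤ γ) →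
      ∫ ω, (F (xhat ω) - F x - inner ℝ (Λ ω) (A (xhat ω) - b)) ∂μ
        ≤ ∫ ω, φ (Λ ω) ∂μ) :
    ∫ ω, (F (xhat ω) - F x + γ * ‖A (xhat ω) - b‖) ∂μ
      ≤ sSup (φ '' {l : EuclideanSpace ℝ (Fin p) | ‖l‖ ≤ γ}) := by
  let v := fun ω => A (xhat ω) - b
  let Λ := fun ω => -((γ / ‖v ω‖) • v ω)
  have hv : Measurable v := (A.continuous.measurable.comp hxhat).sub measurable_const
  have hΛ : Measurable Λ := ((measurable_const.div hv.norm).smul hv).neg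
  have hΛγ : ∀ ω, ‖Λ ω‖ ≤ γ := fun ω => by
    simpa only [Λ, norm_neg] using norm_div_norm_smul_le hγ.le (v ω)
  have hbounded : Bornology.IsBounded (φ '' {l : EuclideanSpace ℝ (Fin p) | ‖l‖ ≤ γ}) := by
    simp_rw [← mem_closedBall_zero_iff, Set.ofPred_mem_eq]
    exact ((isCompact_closedBall 0 γ).image hφ).isBounded
  calc ∫ ω, (F (xhat ω) - F x + γ * ‖A (xhat ω) - b‖) ∂μ
        = ∫ ω, (F (xhat ω) - F x - inner ℝ (Λ ω) (A (xhat ω) - b)) ∂μ := by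
          simp only [Λ, v, inner_neg_left, real_inner_div_norm_smul_self, sub_neg_eq_add]
    _ ≤ ∫ ω, φ (Λ ω) ∂μ := h Λ hΛ hΛγ
    _ ≤ _ := integral_le_sSup_of_forall_mem hbounded
          (hφ.measurable.comp hΛ).aestronglyMeasurable fun ω => ⟨Λ ω, hΛγ ω, rfl⟩

/-- Lemma 1.2 of the paper. -/
theorem stmt_0
    {Ω : Type*} [MeasurableSpace Ω] (μ : Measure Ω) [IsProbabilityMeasure μ]
    {p N : ℕ}
    (A : EuclideanSpace ℝ (Fin N) →L[ℝ] EuclideanSpace ℝ (Fin p))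
    (b : EuclideanSpace ℝ (Fin p))
    (F : EuclideanSpace ℝ (Fin N) → ℝ)
    (hF : ConvexOn ℝ Set.univ F)
    (x : EuclideanSpace ℝ (Fin N)) (γ : ℝ) (hγ : 0 < γ)
    (φ : EuclideanSpace ℝ (Fin p) → ℝ) (hφ : Continuous φ)
    (xhat : Ω → EuclideanSpace ℝ (Fin N)) (hxhat : Measurable xhat)
    (hint1 : Integrable (fun ω => F (xhat ω)) μ)
    (hint2 : Integrable (fun ω => ‖A (xhat ω) - b‖) μ)
    (h : ∀ Λ : Ω → EuclideanSpace ℝ (Fin p), Measurable Λ → (∀ ω, ‖Λ ω‖ ≤ γ) →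
      ∫ ω, (F (xhat ω) - F x - inner ℝ (Λ ω) (A (xhat ω) - b)) ∂μ
        ≤ ∫ ω, φ (Λ ω) ∂μ) :
    ∫ ω, (F (xhat ω) - F x + γ * ‖A (xhat ω) - b‖) ∂μ
      ≤ sSup (φ '' {l : EuclideanSpace ℝ (Fin p) | ‖l‖ ≤ γ}) :=
  stmt_0_general μ A b F x γ hγ φ hφ xhat hxhat h
end

section
/- Let (Ω, μ) be a probability space, A a real p×N matrix, b ∈ ℝ^p, F : ℝ^N → ℝ convex, ε ≥ 0 and γ > 0. Let x̂ : Ω → ℝ^N be measurable with ω ↦ F(x̂(ω)) and ω ↦ ‖A x̂(ω) − b‖ integrable, and suppose ∫ (F(x̂(ω)) − F(x*) + γ‖A x̂(ω) − b‖) dμ(ω) ≤ ε. Suppose x* ∈ ℝ^N and λ* ∈ ℝ^p satisfy the saddle inequality F(z) − F(x*) − ⟨λ*, Az − b⟩ ≥ 0 for all z ∈ ℝ^N, and that ‖λ*‖ < γ. Then ∫ ‖A x̂(ω) − b‖ dμ(ω) ≤ ε/(γ − ‖λ*‖), and −ε‖λ*‖/(γ − ‖λ*‖) ≤ ∫ (F(x̂(ω))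 − F(x*)) dμ(ω) ≤ ε. -/
open MeasureTheory

/-! The saddle inequality and Cauchy–Schwarz give `F z - F x* ≥ -‖λ*‖ ‖A z - b‖` for every `z`.
Integrating along `x̂` bounds `∫ (F x̂ - F x*)` below by `-‖λ*‖ ∫ ‖A x̂ - b‖`; combined with the
penalized bound `∫ (F x̂ - F x*) + γ ∫ ‖A x̂ - b‖ ≤ ε` this leaves `(γ - ‖λ*‖) ∫ ‖A x̂ - b‖ ≤ ε`,
from which all three estimates follow. -/

lemma neg_norm_mul_norm_le_of_forall_inner_le {X G : Type*} [NormedAddCommGroup G]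
    [InnerProductSpace ℝ G] (f : X → ℝ) (r : X → G) (lam : G)
    (h : ∀ z, 0 ≤ f z - inner ℝ lam (r z)) (z : X) :
    -(‖lam‖ * ‖r z‖) ≤ f z := by
  have hinner := (abs_le.1 (abs_real_inner_le_norm lam (r z))).1
  linarith [h z]

lemma bounds_of_add_mul_le {c d L γ ε : ℝ} (hd : 0 ≤ d) (hL : 0 ≤ L) (hLγ : L < γ)
    (hlow : -(L * d) ≤ c) (hpen : c + γ * d ≤ ε) :
    d ≤ ε / (γ - L) ∧ -(ε * L) / (γ - L) ≤ c ∧ c ≤ ε := by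
  have hd_le : d ≤ ε / (γ - L) := by
    rw [le_div_iff₀ (sub_pos.2 hLγ)]
    linarith
  refine ⟨hd_le, ?_, ?_⟩
  · calc -(ε * L) / (γ - L) = -(L * (ε / (γ - L))) := by ring
      _ ≤ -(L * d) := neg_le_neg (mul_le_mul_of_nonneg_left hd_le hL)
      _ ≤ c := hlow
  · linarith [mul_nonneg (hL.trans hLγ.le) hd]

theorem stmt_1_general
    {Ω : Type*} [MeasurableSpace Ω] (μ : Measure Ω) [IsProbabilityMeasure μ]
    {p N : ℕ}
    (A : EuclideanSpace ℝ (Fin N) →L[ℝ] EuclideanSpace ℝ (Fin p))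
    (b : EuclideanSpace ℝ (Fin p))
    (F : EuclideanSpace ℝ (Fin N) → ℝ)
    (ε γ : ℝ)
    (xhat : Ω → EuclideanSpace ℝ (Fin N))
    (xstar : EuclideanSpace ℝ (Fin N)) (lamstar : EuclideanSpace ℝ (Fin p))
    (hint1 : Integrable (fun ω => F (xhat ω)) μ)
    (hint2 : Integrable (fun ω => ‖A (xhat ω) - b‖) μ)
    (hbound : ∫ ω, (F (xhat ω) - F xstar + γ * ‖A (xhat ω) - b‖) ∂μ ≤ ε)
    (hsaddle : ∀ z : EuclideanSpace ℝ (Fin N),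
      0 ≤ F z - F xstar - inner ℝ lamstar (A z - b))
    (hlam : ‖lamstar‖ < γ) :
    (∫ ω, ‖A (xhat ω) - b‖ ∂μ ≤ ε / (γ - ‖lamstar‖)) ∧
    (-(ε * ‖lamstar‖) / (γ - ‖lamstar‖) ≤ ∫ ω, (F (xhat ω) - F xstar) ∂μ) ∧
    (∫ ω, (F (xhat ω) - F xstar) ∂μ ≤ ε) := by
  have hint_gap : Integrable (fun ω => F (xhat ω) - F xstar) μ :=
    hint1.sub (integrable_const _)
  have hlow : -(‖lamstar‖ * ∫ ω, ‖A (xhat ω) - b‖ ∂μ) ≤ ∫ ω, (F (xhat ω) - F xstar) ∂μ := by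
    rw [← integral_const_mul, ← integral_neg]
    exact integral_mono (hint2.const_mul _).neg hint_gap fun ω =>
      neg_norm_mul_norm_le_of_forall_inner_le _ _ lamstar hsaddle (xhat ω)
  have hpen : ∫ ω, (F (xhat ω) - F xstar) ∂μ + γ * ∫ ω, ‖A (xhat ω) - b‖ ∂μ ≤ ε := by
    rwa [integral_add hint_gap (hint2.const_mul γ), integral_const_mul] at hbound
  exact bounds_of_add_mul_le (integral_nonneg fun _ => norm_nonneg _) (norm_nonneg _) hlam
    hlow hpen

/-- Lemma 1.3 of the paper. -/
theorem stmt_1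
    {Ω : Type*} [MeasurableSpace Ω] (μ : Measure Ω) [IsProbabilityMeasure μ]
    {p N : ℕ}
    (A : EuclideanSpace ℝ (Fin N) →L[ℝ] EuclideanSpace ℝ (Fin p))
    (b : EuclideanSpace ℝ (Fin p))
    (F : EuclideanSpace ℝ (Fin N) → ℝ)
    (hF : ConvexOn ℝ Set.univ F)
    (ε γ : ℝ) (hε : 0 ≤ ε) (hγ : 0 < γ)
    (xhat : Ω → EuclideanSpace ℝ (Fin N)) (hxhat : Measurable xhat)
    (xstar : EuclideanSpace ℝ (Fin N)) (lamstar : EuclideanSpace ℝ (Fin p))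
    (hint1 : Integrable (fun ω => F (xhat ω)) μ)
    (hint2 : Integrable (fun ω => ‖A (xhat ω) - b‖) μ)
    (hbound : ∫ ω, (F (xhat ω) - F xstar + γ * ‖A (xhat ω) - b‖) ∂μ ≤ ε)
    (hsaddle : ∀ z : EuclideanSpace ℝ (Fin N),
      0 ≤ F z - F xstar - inner ℝ lamstar (A z - b))
    (hlam : ‖lamstar‖ < γ) :
    (∫ ω, ‖A (xhat ω) - b‖ ∂μ ≤ ε / (γ - ‖lamstar‖)) ∧
    (-(ε * ‖lamstar‖) / (γ - ‖lamstar‖) ≤ ∫ ω, (F (xhat ω) - F xstar) ∂μ) ∧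
    (∫ ω, (F (xhat ω) - F xstar) ∂μ ≤ ε) :=
  stmt_1_general μ A b F ε γ xhat xstar lamstar hint1 hint2 hbound hsaddle hlam
end

section
/- Let f : ℝ^N → ℝ be convex and differentiable with ∇f Lipschitz continuous with constant L_f ≥ 0, let g : ℝ^N → ℝ be μ-strongly convex with μ > 0, and set F := f + g. Let A be a real p×N matrix, b ∈ ℝ^p, β_k ∈ ℝ, ρ_k > 0, and P^k a symmetric positive semidefinite N×N matrix. Let x^k ∈ ℝ^N, λ^k ∈ ℝ^p, r^k := A x^k − b, and suppose x^{k+1} ∈ ℝ^N satisfies the optimality condition: there exists a subgradient v of g at x^{k+1} with ∇f(x^k) − Aᵀ(λ^k − β_k r^k) + v + P^k(x^{k+1} − x^k) = 0. Set r^{k+1} := A x^{k+1} − b and λ^{k+1} := λ^k − ρ_k r^{k+1}. Then for every x ∈ ℝ^N with Ax = b and every λ ∈ ℝ^p: Φ(x^{k+1}, x, λ) ≤ (1/(2ρ_k))(‖λ − λ^k‖² − ‖λ − λ^{k+1}‖² + ‖λ^k − λ^{k+1}‖²) − β_k‖r^{k+1}‖² − (1/2)(‖x^{k+1} − x‖²_{P^k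 − β_k AᵀA + μI} − ‖x^k − x‖²_{P^k − β_k AᵀA} + ‖x^{k+1} − x^k‖²_{P^k − β_k AᵀA − L_f I}), where Φ(x̂, x, λ) := F(x̂) − F(x) − ⟨λ, A x̂ − b⟩. -/
/-!
Three one-sided estimates drive the argument: the first-order convexity bound for `f` at `xᵏ`,
the descent lemma for the `L_f`-Lipschitz gradient between `xᵏ` and `xᵏ⁺¹`, and the
strong-convexity bound for `g` at `xᵏ⁺¹` with the subgradient `v`. Adding them bounds `Φ` by
`⟪∇f(xᵏ) + v, xᵏ⁺¹ - x⟫` plus quadratic terms. The optimality condition rewrites this inner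
product as `⟪λᵏ, rᵏ⁺¹⟫ - βₖ‖rᵏ⁺¹‖² - ⟪W(xᵏ⁺¹ - xᵏ), xᵏ⁺¹ - x⟫` with `W = Pᵏ - βₖ AᵀA`, and the
three-point identity `2⟪W(u - w), u - y⟫ = ‖u - y‖²_W - ‖w - y‖²_W + ‖u - w‖²_W` for symmetric
`W`, applied to the primal iterates and (with `W = I`) to the multipliers, produces the
telescoping differences of the bound.
-/

/-- quadratic form `‖v‖²_W = ⟪v, W v⟫` associated to an operator `W`. -/
noncomputable def qform {E : Type*} [NormedAddCommGroup E] [InnerProductSpace ℝ E]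
    (W : E →L[ℝ] E) (v : E) : ℝ := inner ℝ v (W v)

open RealInnerProductSpace Set Filter Topology

section Convexity

variable {E : Type*} [NormedAddCommGroup E] [InnerProductSpace ℝ E]

lemma StrongConvexOn.add_inner_add_le {g : E → ℝ} {s : Set E} {μ : ℝ}
    (hg : StrongConvexOn s μ g) {x v z : E} (hx : x ∈ s) (hz : z ∈ s)
    (hv : ∀ y ∈ s, g x + ⟪v, y - x⟫ ≤ g y) :
    g x + ⟪v, z - x⟫ + μ / 2 * ‖z - x‖ ^ 2 ≤ g z := by
  have key : ∀ t ∈ Ioo (0 : ℝ) 1, g x + ⟪v, z - x⟫ + μ / 2 * ‖z - x‖ ^ 2 * (1 - t) ≤ g z := by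
    rintro t ⟨ht0, ht1⟩
    have hconv := hg.2 hx hz (sub_nonneg.2 ht1.le) ht0.le (by ring)
    have hsubgrad := hv _ (hg.1 hx hz (sub_nonneg.2 ht1.le) ht0.le (by ring))
    have hpoint : (1 - t) • x + t • z - x = t • (z - x) := by
      rw [smul_sub, sub_smul, one_smul]; abel
    rw [hpoint, real_inner_smul_right] at hsubgrad
    simp only [smul_eq_mul, norm_sub_rev x z] at hconv
    have hscaled : t * (g x + ⟪v, z - x⟫ + μ / 2 * ‖z - x‖ ^ 2 * (1 - t)) ≤ t * g z := by
      linarith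
    exact le_of_mul_le_mul_left hscaled ht0
  have hlim : Tendsto (fun t : ℝ => g x + ⟪v, z - x⟫ + μ / 2 * ‖z - x‖ ^ 2 * (1 - t)) (𝓝[>] 0)
      (𝓝 (g x + ⟪v, z - x⟫ + μ / 2 * ‖z - x‖ ^ 2)) := by
    have hcont : Continuous (fun t : ℝ => g x + ⟪v, z - x⟫ + μ / 2 * ‖z - x‖ ^ 2 * (1 - t)) := by
      fun_prop
    simpa using (hcont.tendsto 0).mono_left nhdsWithin_le_nhds
  refine le_of_tendsto hlim ?_
  filter_upwards [Ioo_mem_nhdsGT one_pos] with t ht using key t ht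

variable [CompleteSpace E] {f : E → ℝ}

lemma HasGradientAt.hasDerivAt_comp_add_smul {f' x d : E} {t : ℝ}
    (hf : HasGradientAt f f' (x + t • d)) :
    HasDerivAt (fun s : ℝ => f (x + s • d)) ⟪f', d⟫ t := by
  have hline : HasDerivAt (fun s : ℝ => x + s • d) d t := by
    simpa using ((hasDerivAt_id t).smul_const d).const_add x
  simpa [InnerProductSpace.toDual_apply_apply, Function.comp_def] using
    hf.hasFDerivAt.comp_hasDerivAt t hline

lemma ConvexOn.add_inner_le_of_hasGradientAt {s : Set E} (hf : ConvexOn ℝ s f) {f' x z : E}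
    (hx : x ∈ s) (hz : z ∈ s) (hf' : HasGradientAt f f' x) :
    f x + ⟪f', z - x⟫ ≤ f z := by
  have hline : ConvexOn ℝ (AffineMap.lineMap x z ⁻¹' s) (fun t : ℝ => f (x + t • (z - x))) := by
    have hcomp : (fun t : ℝ => f (x + t • (z - x))) = f ∘ AffineMap.lineMap x z := by
      ext t
      simp [AffineMap.lineMap_apply, add_comm]
    rw [hcomp]
    exact hf.comp_affineMap _
  have hderiv : HasDerivAt (fun t : ℝ => f (x + t • (z - x))) ⟪f', z - x⟫ 0 :=
    HasGradientAt.hasDerivAt_comp_add_smul (by simpa using hf')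
  have hslope := hline.le_slope_of_hasDerivAt (by simpa using hx) (by simpa using hz)
    one_pos hderiv
  simp only [slope, vsub_eq_sub, sub_zero, inv_one, one_smul, smul_eq_mul, one_mul, zero_smul,
    add_zero, add_sub_cancel] at hslope
  linarith

lemma le_add_inner_add_of_lipschitz_gradient {G : E → E} {L : ℝ}
    (hf : ∀ z, HasGradientAt f (G z) z) (hG : ∀ u v, ‖G u - G v‖ ≤ L * ‖u - v‖) (x z : E) :
    f z ≤ f x + ⟪G x, z - x⟫ + L / 2 * ‖z - x‖ ^ 2 := by
  set d := z - x
  let φ : ℝ → ℝ := fun t => f (x + t • d) - t * ⟪G x, d⟫ - t ^ 2 * (L / 2 * ‖d‖ ^ 2)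
  have hφ : ∀ t, HasDerivAt φ (⟪G (x + t • d), d⟫ - ⟪G x, d⟫ - t * (L * ‖d‖ ^ 2)) t := by
    intro t
    have hline : HasDerivAt (fun s : ℝ => f (x + s • d)) ⟪G (x + t • d), d⟫ t :=
      (hf _).hasDerivAt_comp_add_smul
    exact ((hline.sub ((hasDerivAt_id t).mul_const ⟪G x, d⟫)).sub
      ((hasDerivAt_pow 2 t).mul_const (L / 2 * ‖d‖ ^ 2))).congr_deriv (by norm_num; ring)
  have hanti : AntitoneOn φ (Icc 0 1) := by
    refine antitoneOn_of_deriv_nonpos (convex_Icc 0 1)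
      (fun t _ => (hφ t).continuousAt.continuousWithinAt)
      (fun t _ => (hφ t).differentiableAt.differentiableWithinAt) fun t ht => ?_
    rw [interior_Icc] at ht
    have hlip : ‖G (x + t • d) - G x‖ ≤ L * (t * ‖d‖) := by
      simpa [norm_smul, abs_of_pos ht.1] using hG (x + t • d) x
    rw [(hφ t).deriv, sub_nonpos, ← inner_sub_left]
    calc ⟪G (x + t • d) - G x, d⟫ ≤ ‖G (x + t • d) - G x‖ * ‖d‖ := real_inner_le_norm _ _
      _ ≤ L * (t * ‖d‖) * ‖d‖ := by gcongr
      _ = t * (L * ‖d‖ ^ 2) := by ring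
  have h01 := hanti (left_mem_Icc.2 zero_le_one) (right_mem_Icc.2 zero_le_one) zero_le_one
  simp only [φ, d, zero_smul, add_zero, zero_mul, sub_zero, one_smul, add_sub_cancel, one_mul,
    one_pow, zero_pow two_ne_zero] at h01
  linarith

lemma add_sub_add_le_of_lipschitz_gradient_of_strongConvexOn {g : E → ℝ} {G : E → E} {L μ : ℝ}
    (hf : ConvexOn ℝ univ f) (hfG : ∀ z, HasGradientAt f (G z) z)
    (hG : ∀ u v, ‖G u - G v‖ ≤ L * ‖u - v‖) (hg : StrongConvexOn univ μ g) {x' v : E}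
    (hv : ∀ z, g x' + ⟪v, z - x'⟫ ≤ g z) (x₀ z : E) :
    f x' + g x' - (f z + g z)
      ≤ ⟪G x₀ + v, x' - z⟫ + L / 2 * ‖x' - x₀‖ ^ 2 - μ / 2 * ‖x' - z‖ ^ 2 := by
  have hf_lower := hf.add_inner_le_of_hasGradientAt (mem_univ x₀) (mem_univ z) (hfG x₀)
  have hf_upper := le_add_inner_add_of_lipschitz_gradient hfG hG x₀ x'
  have hg_lower := hg.add_inner_add_le (mem_univ x') (mem_univ z) fun y _ => hv y
  have hsplit : ⟪G x₀ + v, x' - z⟫ = ⟪G x₀, x' - x₀⟫ - ⟪G x₀, z - x₀⟫ - ⟪v, z - x'⟫ := by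
    have hdiff : x' - z = (x' - x₀) - (z - x₀) := by abel
    rw [inner_add_left, hdiff, inner_sub_right, ← hdiff, ← neg_sub z x', inner_neg_right]
    ring
  rw [norm_sub_rev z x'] at hg_lower
  linarith

end Convexity

section QuadraticForm

variable {E : Type*} [NormedAddCommGroup E] [InnerProductSpace ℝ E]

lemma qform_add_smul_one (W : E →L[ℝ] E) (c : ℝ) (u : E) :
    qform (W + c • 1) u = qform W u + c * ‖u‖ ^ 2 := by
  simp [qform, inner_add_right, real_inner_smul_right]

lemma qform_sub_smul_one (W : E →L[ℝ] E) (c : ℝ) (u : E) :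
    qform (W - c • 1) u = qform W u - c * ‖u‖ ^ 2 := by
  simpa [sub_eq_add_neg, neg_smul] using qform_add_smul_one W (-c) u

lemma two_mul_inner_sub_eq_qform {W : E →L[ℝ] E} (hW : (W : E →ₗ[ℝ] E).IsSymmetric)
    (u w y : E) :
    2 * ⟪W (u - w), u - y⟫ = qform W (u - y) - qform W (w - y) + qform W (u - w) := by
  rw [show u - w = (u - y) - (w - y) by abel]
  generalize u - y = a
  generalize w - y = c
  have hsymm : ⟪W c, a⟫ = ⟪c, W a⟫ := hW c a
  simp only [qform, map_sub, inner_sub_left, inner_sub_right]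
  rw [real_inner_comm (W a) a, real_inner_comm (W c) a, hsymm]
  ring

lemma two_mul_inner_sub_eq_norm_sq (u w y : E) :
    2 * ⟪u - w, u - y⟫ = ‖u - y‖ ^ 2 - ‖w - y‖ ^ 2 + ‖u - w‖ ^ 2 := by
  rw [show u - w = (u - y) - (w - y) by abel]
  generalize u - y = a
  generalize w - y = c
  rw [norm_sub_sq_real, inner_sub_left, real_inner_self_eq_norm_sq, real_inner_comm]
  ring

lemma isSymmetric_sub_smul_adjoint_comp_self {F : Type*} [NormedAddCommGroup F]
    [InnerProductSpace ℝ F] [CompleteSpace E] [CompleteSpace F] {P : E →L[ℝ] E}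
    (hP : (P : E →ₗ[ℝ] E).IsSymmetric) (β : ℝ) (A : E →L[ℝ] F) :
    ((P - β • (ContinuousLinearMap.adjoint A).comp A : E →L[ℝ] E) : E →ₗ[ℝ] E).IsSymmetric :=
  fun u w => by
    simpa [inner_sub_left, inner_sub_right, real_inner_smul_left, real_inner_smul_right,
      ContinuousLinearMap.adjoint_inner_left, ContinuousLinearMap.adjoint_inner_right] using hP u w

end QuadraticForm

theorem stmt_2_general
    {p N : ℕ}
    (f g : EuclideanSpace ℝ (Fin N) → ℝ)
    (Gf : EuclideanSpace ℝ (Fin N) → EuclideanSpace ℝ (Fin N))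
    (Lf : ℝ)
    (hfconv : ConvexOn ℝ Set.univ f)
    (hfgrad : ∀ z, HasGradientAt f (Gf z) z)
    (hflip : ∀ u v, ‖Gf u - Gf v‖ ≤ Lf * ‖u - v‖)
    (μ : ℝ)
    (hg : ConvexOn ℝ Set.univ (fun z => g z - μ / 2 * ‖z‖ ^ 2))
    (A : EuclideanSpace ℝ (Fin N) →L[ℝ] EuclideanSpace ℝ (Fin p))
    (b : EuclideanSpace ℝ (Fin p))
    (βk ρk : ℝ) (hρk : 0 < ρk)
    (P : EuclideanSpace ℝ (Fin N) →L[ℝ] EuclideanSpace ℝ (Fin N))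
    (hPsym : ∀ u v, inner ℝ (P u) v = (inner ℝ u (P v) : ℝ))
    (xk xkp : EuclideanSpace ℝ (Fin N)) (lamk : EuclideanSpace ℝ (Fin p))
    (v : EuclideanSpace ℝ (Fin N))
    (hv : ∀ z, g xkp + inner ℝ v (z - xkp) ≤ g z)
    (hopt : Gf xk - ContinuousLinearMap.adjoint A (lamk - βk • (A xk - b))
        + v + P (xkp - xk) = 0)
    (rkp lamkp : EuclideanSpace ℝ (Fin p))
    (hrkp : rkp = A xkp - b)
    (hlamkp : lamkp = lamk - ρk • rkp)
    (x : EuclideanSpace ℝ (Fin N)) (lam : EuclideanSpace ℝ (Fin p))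
    (hx : A x = b) :
    (f xkp + g xkp) - (f x + g x) - inner ℝ lam (A xkp - b)
      ≤ 1 / (2 * ρk) * (‖lam - lamk‖ ^ 2 - ‖lam - lamkp‖ ^ 2 + ‖lamk - lamkp‖ ^ 2)
        - βk * ‖rkp‖ ^ 2
        - 1 / 2 *
          (qform (P - βk • ((ContinuousLinearMap.adjoint A).comp A) + μ • 1) (xkp - x)
            - qform (P - βk • ((ContinuousLinearMap.adjoint A).comp A)) (xk - x)
            + qform (P - βk • ((ContinuousLinearMap.adjoint A).comp A) - Lf • 1) (xkp - xk)) := by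
  set W := P - βk • ((ContinuousLinearMap.adjoint A).comp A)
  have hbound := add_sub_add_le_of_lipschitz_gradient_of_strongConvexOn hfconv hfgrad hflip
    (strongConvexOn_iff_convex.2 hg) hv xk x
  have hres : rkp = A (xkp - x) := by rw [hrkp, map_sub, hx]
  have hgrad : ⟪Gf xk + v, xkp - x⟫ = ⟪lamk, rkp⟫ - βk * ‖rkp‖ ^ 2 - ⟪W (xkp - xk), xkp - x⟫ := by
    have hsum : Gf xk + v
        = ContinuousLinearMap.adjoint A (lamk - βk • (A xk - b)) - P (xkp - xk) := by
      rw [← sub_eq_zero, ← hopt]; abel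
    have hres_k : A xk - b = A (xk - x) := by rw [map_sub, hx]
    have hA : A (xkp - xk) = A (xkp - x) - A (xk - x) := by
      rw [← map_sub, sub_sub_sub_cancel_right]
    simp only [hsum, W, hres, hres_k, hA, inner_sub_left, ContinuousLinearMap.adjoint_inner_left,
      sub_apply, smul_apply, ContinuousLinearMap.comp_apply, real_inner_smul_left,
      real_inner_self_eq_norm_sq]
    ring
  have hdual : 1 / (2 * ρk) * (‖lam - lamk‖ ^ 2 - ‖lam - lamkp‖ ^ 2 + ‖lamk - lamkp‖ ^ 2)
      = ⟪lamk, rkp⟫ - ⟪lam, rkp⟫ := by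
    rw [norm_sub_rev lam lamk, norm_sub_rev lam lamkp, ← two_mul_inner_sub_eq_norm_sq, hlamkp,
      sub_sub_cancel, real_inner_smul_left, inner_sub_right, real_inner_comm rkp,
      real_inner_comm rkp]
    field_simp
  have hthree := two_mul_inner_sub_eq_qform
    (isSymmetric_sub_smul_adjoint_comp_self hPsym βk A) xkp xk x
  rw [hdual, qform_add_smul_one, qform_sub_smul_one, ← hrkp]
  linarith

/-- Lemma 2.1 (one-iteration analysis of accelerated proximal Jacobian ADMM). -/
theorem stmt_2
    {p N : ℕ}
    (f g : EuclideanSpace ℝ (Fin N) → ℝ)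
    (Gf : EuclideanSpace ℝ (Fin N) → EuclideanSpace ℝ (Fin N))
    (Lf : ℝ) (hLf : 0 ≤ Lf)
    (hfconv : ConvexOn ℝ Set.univ f)
    (hfgrad : ∀ z, HasGradientAt f (Gf z) z)
    (hflip : ∀ u v, ‖Gf u - Gf v‖ ≤ Lf * ‖u - v‖)
    (μ : ℝ) (hμ : 0 < μ)
    (hg : ConvexOn ℝ Set.univ (fun z => g z - μ / 2 * ‖z‖ ^ 2))
    (A : EuclideanSpace ℝ (Fin N) →L[ℝ] EuclideanSpace ℝ (Fin p))
    (b : EuclideanSpace ℝ (Fin p))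
    (βk ρk : ℝ) (hρk : 0 < ρk)
    (P : EuclideanSpace ℝ (Fin N) →L[ℝ] EuclideanSpace ℝ (Fin N))
    (hPsym : ∀ u v, inner ℝ (P u) v = (inner ℝ u (P v) : ℝ))
    (hPpsd : ∀ v, (0 : ℝ) ≤ inner ℝ v (P v))
    (xk xkp : EuclideanSpace ℝ (Fin N)) (lamk : EuclideanSpace ℝ (Fin p))
    (v : EuclideanSpace ℝ (Fin N))
    (hv : ∀ z, g xkp + inner ℝ v (z - xkp) ≤ g z)
    (hopt : Gf xk - ContinuousLinearMap.adjoint A (lamk - βk • (A xk - b))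
        + v + P (xkp - xk) = 0)
    (rkp lamkp : EuclideanSpace ℝ (Fin p))
    (hrkp : rkp = A xkp - b)
    (hlamkp : lamkp = lamk - ρk • rkp)
    (x : EuclideanSpace ℝ (Fin N)) (lam : EuclideanSpace ℝ (Fin p))
    (hx : A x = b) :
    (f xkp + g xkp) - (f x + g x) - inner ℝ lam (A xkp - b)
      ≤ 1 / (2 * ρk) * (‖lam - lamk‖ ^ 2 - ‖lam - lamkp‖ ^ 2 + ‖lamk - lamkp‖ ^ 2)
        - βk * ‖rkp‖ ^ 2
        - 1 / 2 *
          (qform (P - βk • ((ContinuousLinearMap.adjoint A).comp A) + μ • 1) (xkp - x)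
            - qform (P - βk • ((ContinuousLinearMap.adjoint A).comp A)) (xk - x)
            + qform (P - βk • ((ContinuousLinearMap.adjoint A).comp A) - Lf • 1) (xkp - xk)) :=
  stmt_2_general f g Gf Lf hfconv hfgrad hflip μ hg A b βk ρk hρk P hPsym xk xkp lamk v hv hopt rkp
    lamkp hrkp hlamkp x lam hx
end

section
/- Let f : ℝ^N → ℝ be convex and differentiable with ∇f Lipschitz with constant L_f ≥ 0, g : ℝ^N → ℝ μ-strongly convex with μ > 0, F := f + g, A a real p×N matrix, b ∈ ℝ^p. Let k₀ ≥ 0, and for k ≥ 1 let β_k ∈ ℝ, ρ_k > 0 and symmetric N×N matrices P^k satisfy: 0 < ρ_k ≤ 2β_k and P^k ⪰ β_k AᵀA + L_f I for all k ≥ 1; (k+k₀+1)/ρ_k ≤ (k+k₀)/ρ_{k−1} for all k ≥ 2; and (k+k₀+1)(P^k − β_k AᵀA) ⪯ (k+k₀)(P^{k−1} − β_{k−1} AᵀA + μI) for all k ≥ 2. Let sequences x^k ∈ ℝ^N, λ^k ∈ ℝ^p, r^k := A x^k − b satisfy, for each k ≥ 1: there is a subgradient v of g at x^{k+1} with ∇f(x^k)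 − Aᵀ(λ^k − β_k r^k) + v + P^k(x^{k+1} − x^k) = 0, and λ^{k+1} = λ^k − ρ_k r^{k+1}. Then for every t ≥ 1 and every (x, λ) with Ax = b: ∑_{k=1}^t (k+k₀+1) Φ(x^{k+1}, x, λ) + ∑_{k=1}^t ((k+k₀+1)/2)(2β_k − ρ_k)‖r^{k+1}‖² + ((t+k₀+1)/2)‖x^{t+1} − x‖²_{P^t − β_t AᵀA + μI} ≤ φ₁(x, λ), where φ₁(x, λ) := ((k₀+2)/(2ρ₁))‖λ − λ¹‖² + ((k₀+2)/2)‖x¹ − x‖²_{P¹ − β₁ AᵀA}. -/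
open Set Filter Topology ContinuousLinearMap
open scoped RealInnerProductSpace

section QuadraticForm

variable {E : Type*} [NormedAddCommGroup E] [InnerProductSpace ℝ E]

@[simp] lemma qform_add (W₁ W₂ : E →L[ℝ] E) (v : E) :
    qform (W₁ + W₂) v = qform W₁ v + qform W₂ v :=
  inner_add_right _ _ _

@[simp] lemma qform_sub (W₁ W₂ : E →L[ℝ] E) (v : E) :
    qform (W₁ - W₂) v = qform W₁ v - qform W₂ v :=
  inner_sub_right _ _ _

@[simp] lemma qform_smul (c : ℝ) (W : E →L[ℝ] E) (v : E) : qform (c • W) v = c * qform W v :=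
  real_inner_smul_right _ _ _

@[simp] lemma qform_one (v : E) : qform 1 v = ‖v‖ ^ 2 :=
  real_inner_self_eq_norm_sq v

lemma qform_sub_right {W : E →L[ℝ] E} (hW : (W : E →ₗ[ℝ] E).IsSymmetric) (u v : E) :
    qform W (u - v) = qform W u - 2 * ⟪W v, u⟫ + qform W v := by
  have hsymm : ⟪W v, u⟫ = ⟪v, W u⟫ := hW v u
  simp only [qform, map_sub, inner_sub_left, inner_sub_right]
  linarith [real_inner_comm u (W v)]

lemma ContinuousLinearMap.isSymmetric_adjoint_comp_self {F : Type*} [NormedAddCommGroup F]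
    [InnerProductSpace ℝ F] [CompleteSpace E] [CompleteSpace F] (A : E →L[ℝ] F) :
    ((adjoint A ∘L A : E →L[ℝ] E) : E →ₗ[ℝ] E).IsSymmetric := fun u v => by
  simp [adjoint_inner_left, adjoint_inner_right]

end QuadraticForm

section Convexity

variable {E : Type*} [NormedAddCommGroup E] [InnerProductSpace ℝ E]

def HasSubgradientAt (g : E → ℝ) (v x : E) : Prop :=
  ∀ z, g x + ⟪v, z - x⟫ ≤ g z

lemma HasGradientAt.hasDerivAt_comp_lineMap [CompleteSpace E] {f : E → ℝ} {f' x y : E} {s : ℝ}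
    (hf : HasGradientAt f f' (AffineMap.lineMap x y s)) :
    HasDerivAt (fun s ↦ f (AffineMap.lineMap x y s)) ⟪f', y - x⟫ s := by
  have := hf.hasFDerivAt.comp_hasDerivAt s AffineMap.hasDerivAt_lineMap
  simp only [InnerProductSpace.toDual_apply_apply] at this
  exact this

lemma ConvexOn.add_inner_sub_le_of_hasGradientAt [CompleteSpace E] {f : E → ℝ} {f' x : E}
    (hf : ConvexOn ℝ univ f) (hf' : HasGradientAt f f' x) (y : E) :
    f x + ⟪f', y - x⟫ ≤ f y := by
  have hline : ConvexOn ℝ univ (fun s : ℝ ↦ f (AffineMap.lineMap x y s)) :=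
    hf.comp_affineMap (AffineMap.lineMap x y)
  have hderiv : HasDerivAt (fun s : ℝ ↦ f (AffineMap.lineMap x y s)) ⟪f', y - x⟫ 0 :=
    HasGradientAt.hasDerivAt_comp_lineMap (by simpa using hf')
  have := hline.le_slope_of_hasDerivAt (mem_univ 0) (mem_univ 1) zero_lt_one hderiv
  simp only [slope_def_field, AffineMap.lineMap_apply_zero, AffineMap.lineMap_apply_one] at this
  linarith

lemma le_add_inner_sub_add_sq_of_lipschitz_gradient [CompleteSpace E] {f : E → ℝ} {f' : E → E}
    {L : ℝ} (hf : ∀ z, HasGradientAt f (f' z) z) (hL : ∀ u v, ‖f' u - f' v‖ ≤ L * ‖u - v‖)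
    (x y : E) : f y ≤ f x + ⟪f' x, y - x⟫ + L / 2 * ‖y - x‖ ^ 2 := by
  set φ : ℝ → ℝ := fun s ↦
    f (AffineMap.lineMap x y s) - s * ⟪f' x, y - x⟫ - L / 2 * ‖y - x‖ ^ 2 * s ^ 2
  have hφ : ∀ s, HasDerivAt φ
      (⟪f' (AffineMap.lineMap x y s) - f' x, y - x⟫ - L * ‖y - x‖ ^ 2 * s) s := fun s ↦ by
    have := (((hf _).hasDerivAt_comp_lineMap (x := x) (y := y)).sub
      ((hasDerivAt_id s).mul_const ⟪f' x, y - x⟫)).sub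
        ((hasDerivAt_pow 2 s).const_mul (L / 2 * ‖y - x‖ ^ 2))
    exact this.congr_deriv (by rw [inner_sub_left]; ring)
  have hanti : AntitoneOn φ (Icc 0 1) := by
    refine antitoneOn_of_hasDerivWithinAt_nonpos (convex_Icc 0 1)
      (fun s _ ↦ (hφ s).continuousAt.continuousWithinAt) (fun s _ ↦ (hφ s).hasDerivWithinAt) ?_
    intro s hs
    rw [interior_Icc] at hs
    have hdist : ‖AffineMap.lineMap x y s - x‖ = s * ‖y - x‖ := by
      rw [← vsub_eq_sub, AffineMap.lineMap_vsub_left, norm_smul, Real.norm_of_nonneg hs.1.le,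
        vsub_eq_sub]
    calc ⟪f' (AffineMap.lineMap x y s) - f' x, y - x⟫ - L * ‖y - x‖ ^ 2 * s
        ≤ ‖f' (AffineMap.lineMap x y s) - f' x‖ * ‖y - x‖ - L * ‖y - x‖ ^ 2 * s := by
          gcongr; exact real_inner_le_norm _ _
      _ ≤ L * ‖AffineMap.lineMap x y s - x‖ * ‖y - x‖ - L * ‖y - x‖ ^ 2 * s := by
          gcongr; exact hL _ _
      _ = 0 := by rw [hdist]; ring
  have := hanti (left_mem_Icc.2 zero_le_one) (right_mem_Icc.2 zero_le_one) zero_le_one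
  simp only [φ, AffineMap.lineMap_apply_zero, AffineMap.lineMap_apply_one] at this
  linarith

lemma StrongConvexOn.add_inner_sub_add_sq_le {g : E → ℝ} {m : ℝ} (hg : StrongConvexOn univ m g)
    {v x : E} (hv : HasSubgradientAt g v x) (z : E) :
    g x + ⟪v, z - x⟫ + m / 2 * ‖z - x‖ ^ 2 ≤ g z := by
  -- Strong convexity on the segment `[x, z]` against the subgradient bound, divided by `θ`;
  -- then `θ → 0⁺`.
  have hθ : ∀ θ ∈ Ioc (0 : ℝ) 1, ⟪v, z - x⟫ + m / 2 * ‖z - x‖ ^ 2 * (1 - θ) ≤ g z - g x := by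
    rintro θ ⟨hθ0, hθ1⟩
    have hconv := hg.2 (mem_univ x) (mem_univ z) (sub_nonneg.2 hθ1) hθ0.le (sub_add_cancel 1 θ)
    have hsub := hv ((1 - θ) • x + θ • z)
    have hw : (1 - θ) • x + θ • z - x = θ • (z - x) := by module
    rw [hw, real_inner_smul_right] at hsub
    rw [norm_sub_rev, smul_eq_mul, smul_eq_mul] at hconv
    have : θ * (⟪v, z - x⟫ + m / 2 * ‖z - x‖ ^ 2 * (1 - θ)) ≤ θ * (g z - g x) := by
      nlinarith
    exact le_of_mul_le_mul_left this hθ0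
  have hlim : Tendsto (fun θ : ℝ ↦ ⟪v, z - x⟫ + m / 2 * ‖z - x‖ ^ 2 * (1 - θ)) (𝓝[>] 0)
      (𝓝 (⟪v, z - x⟫ + m / 2 * ‖z - x‖ ^ 2 * (1 - 0))) :=
    (Continuous.tendsto (by fun_prop) 0).mono_left nhdsWithin_le_nhds
  have := le_of_tendsto hlim (eventually_of_mem (Ioc_mem_nhdsGT zero_lt_one) hθ)
  linarith

lemma three_point_inequality [CompleteSpace E] {f g : E → ℝ} {f' : E → E} {L m : ℝ}
    (hf : ConvexOn ℝ univ f) (hf' : ∀ z, HasGradientAt f (f' z) z)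
    (hL : ∀ u v, ‖f' u - f' v‖ ≤ L * ‖u - v‖) (hg : StrongConvexOn univ m g)
    {x y v : E} (hv : HasSubgradientAt g v y) (z : E) :
    f y + g y ≤ f z + g z + ⟪f' x + v, y - z⟫ + L / 2 * ‖y - x‖ ^ 2 - m / 2 * ‖y - z‖ ^ 2 := by
  have hdescent := le_add_inner_sub_add_sq_of_lipschitz_gradient hf' hL x y
  have hconvex := hf.add_inner_sub_le_of_hasGradientAt (hf' x) z
  have hstrong := hg.add_inner_sub_add_sq_le hv z
  have hinner : ⟪f' x + v, y - z⟫ = ⟪f' x, y - x⟫ - ⟪f' x, z - x⟫ - ⟪v, z - y⟫ := by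
    simp only [inner_add_left, inner_sub_right]
    ring
  rw [norm_sub_rev] at hstrong
  linarith

end Convexity

section LinearizedALM

variable {E F : Type*} [NormedAddCommGroup E] [InnerProductSpace ℝ E] [CompleteSpace E]
  [NormedAddCommGroup F] [InnerProductSpace ℝ F] [CompleteSpace F]

theorem linearizedALM_step_le {f g : E → ℝ} {f' : E → E} {L μ : ℝ}
    (hf : ConvexOn ℝ univ f) (hf' : ∀ z, HasGradientAt f (f' z) z)
    (hL : ∀ u v, ‖f' u - f' v‖ ≤ L * ‖u - v‖) (hg : StrongConvexOn univ μ g)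
    {A : E →L[ℝ] F} {b : F} {β ρ : ℝ} (hρ : 0 < ρ) {P : E →L[ℝ] E}
    (hP : (P : E →ₗ[ℝ] E).IsSymmetric)
    (hPL : ∀ d, 0 ≤ qform (P - β • (adjoint A ∘L A) - L • 1) d)
    {x x' v : E} {l : F} (hv : HasSubgradientAt g v x')
    (hx' : f' x - adjoint A (l - β • (A x - b)) + v + P (x' - x) = 0)
    {z : E} {lam : F} (hz : A z = b) :
    (f x' + g x' - (f z + g z) - ⟪lam, A x' - b⟫) + (2 * β - ρ) / 2 * ‖A x' - b‖ ^ 2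
      + 1 / (2 * ρ) * ‖lam - (l - ρ • (A x' - b))‖ ^ 2
      + 1 / 2 * qform (P - β • (adjoint A ∘L A) + μ • 1) (x' - z)
    ≤ 1 / (2 * ρ) * ‖lam - l‖ ^ 2 + 1 / 2 * qform (P - β • (adjoint A ∘L A)) (x - z) := by
  set Q := P - β • (adjoint A ∘L A) with hQ
  set r := A x' - b with hr
  have hQsym : (Q : E →ₗ[ℝ] E).IsSymmetric := by
    rw [hQ, toLinearMap_sub, toLinearMap_smul]
    exact hP.sub ((isSymmetric_adjoint_comp_self A).smul (conj_trivial β))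
  have hgrad : f' x + v + Q (x' - x) = adjoint A (l - β • r) := by
    have hAd : A (x' - x) = r - (A x - b) := by rw [map_sub, hr]; abel
    calc f' x + v + Q (x' - x)
        = (f' x - adjoint A (l - β • (A x - b)) + v + P (x' - x))
            + adjoint A (l - β • (A x - b) - β • A (x' - x)) := by
          simp only [hQ, sub_apply, smul_apply, comp_apply, map_sub, map_smul]; module
      _ = adjoint A (l - β • r) := by rw [hx', hAd, zero_add]; congr 1; module
  have hgrad_inner : ⟪f' x + v, x' - z⟫ = ⟪l - β • r, r⟫ - ⟪Q (x' - x), x' - z⟫ := by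
    rw [eq_sub_iff_add_eq, ← inner_add_left, hgrad, adjoint_inner_left, map_sub, hz]
  have hthree := three_point_inequality hf hf' hL hg (x := x) hv z
  have hpolar : qform Q (x - z)
      = qform Q (x' - z) - 2 * ⟪Q (x' - x), x' - z⟫ + qform Q (x' - x) := by
    rw [← qform_sub_right hQsym]; congr 1; abel
  have hPd := hPL (x' - x)
  rw [qform_sub, qform_smul, qform_one] at hPd
  have hdual : 1 / (2 * ρ) * ‖lam - (l - ρ • r)‖ ^ 2
      = 1 / (2 * ρ) * ‖lam - l‖ ^ 2 + ⟪lam - l, r⟫ + ρ / 2 * ‖r‖ ^ 2 := by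
    rw [show lam - (l - ρ • r) = (lam - l) + ρ • r by abel, norm_add_sq_real,
      real_inner_smul_right, norm_smul, Real.norm_of_nonneg hρ.le]
    field_simp
  rw [qform_add, qform_smul, qform_one, hdual]
  simp only [inner_sub_left, real_inner_smul_left, real_inner_self_eq_norm_sq] at hgrad_inner ⊢
  linarith

end LinearizedALM

lemma sum_Icc_add_le_of_forall_le {α : Type*} [AddCommMonoid α] [PartialOrder α]
    [IsOrderedAddMonoid α] {c a b : ℕ → α} {m : ℕ}
    (hstep : ∀ k, m ≤ k → c k + a k ≤ b k) (hlink : ∀ k, m ≤ k → b (k + 1) ≤ a k)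
    {t : ℕ} (ht : m ≤ t) : ∑ k ∈ Finset.Icc m t, c k + a t ≤ b m := by
  induction t, ht using Nat.le_induction with
  | base => simpa using hstep m le_rfl
  | succ n hn ih =>
    calc ∑ k ∈ Finset.Icc m (n + 1), c k + a (n + 1)
        = ∑ k ∈ Finset.Icc m n, c k + (c (n + 1) + a (n + 1)) := by
          rw [Finset.sum_Icc_succ_top (by omega), add_assoc]
      _ ≤ ∑ k ∈ Finset.Icc m n, c k + a n := by
          gcongr; exact (hstep _ (by omega)).trans (hlink n hn)
      _ ≤ b m := ih

theorem stmt_3_general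
    {p N : ℕ}
    (f g : EuclideanSpace ℝ (Fin N) → ℝ)
    (Gf : EuclideanSpace ℝ (Fin N) → EuclideanSpace ℝ (Fin N))
    (Lf : ℝ)
    (hfconv : ConvexOn ℝ Set.univ f)
    (hfgrad : ∀ z, HasGradientAt f (Gf z) z)
    (hflip : ∀ u v, ‖Gf u - Gf v‖ ≤ Lf * ‖u - v‖)
    (μ : ℝ)
    (hg : ConvexOn ℝ Set.univ (fun z => g z - μ / 2 * ‖z‖ ^ 2))
    (A : EuclideanSpace ℝ (Fin N) →L[ℝ] EuclideanSpace ℝ (Fin p))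
    (b : EuclideanSpace ℝ (Fin p))
    (k₀ : ℝ) (hk₀ : 0 ≤ k₀)
    (β ρ : ℕ → ℝ)
    (P : ℕ → (EuclideanSpace ℝ (Fin N) →L[ℝ] EuclideanSpace ℝ (Fin N)))
    (hPsym : ∀ k, 1 ≤ k → ∀ u v, inner ℝ (P k u) v = (inner ℝ u (P k v) : ℝ))
    (hρpos : ∀ k, 1 ≤ k → 0 < ρ k)
    (hPge : ∀ k, 1 ≤ k → ∀ v,
      0 ≤ qform (P k - β k • ((ContinuousLinearMap.adjoint A).comp A) - Lf • 1) v)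
    (hρmono : ∀ k : ℕ, 2 ≤ k →
      ((k : ℝ) + k₀ + 1) / ρ k ≤ ((k : ℝ) + k₀) / ρ (k - 1))
    (hPmono : ∀ k : ℕ, 2 ≤ k → ∀ v,
      ((k : ℝ) + k₀ + 1) *
          qform (P k - β k • ((ContinuousLinearMap.adjoint A).comp A)) v
        ≤ ((k : ℝ) + k₀) *
          qform (P (k - 1) - β (k - 1) • ((ContinuousLinearMap.adjoint A).comp A) + μ • 1) v)
    (x : ℕ → EuclideanSpace ℝ (Fin N)) (lamseq : ℕ → EuclideanSpace ℝ (Fin p))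
    (hiter : ∀ k, 1 ≤ k → ∃ v : EuclideanSpace ℝ (Fin N),
      (∀ z, g (x (k + 1)) + inner ℝ v (z - x (k + 1)) ≤ g z) ∧
      Gf (x k) - ContinuousLinearMap.adjoint A (lamseq k - β k • (A (x k) - b))
        + v + P k (x (k + 1) - x k) = 0)
    (hlam : ∀ k, 1 ≤ k → lamseq (k + 1) = lamseq k - ρ k • (A (x (k + 1)) - b))
    (t : ℕ) (ht : 1 ≤ t)
    (xx : EuclideanSpace ℝ (Fin N)) (lam : EuclideanSpace ℝ (Fin p))
    (hxx : A xx = b) :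
    (∑ k ∈ Finset.Icc 1 t, ((k : ℝ) + k₀ + 1) *
        ((f (x (k + 1)) + g (x (k + 1))) - (f xx + g xx) - inner ℝ lam (A (x (k + 1)) - b)))
      + (∑ k ∈ Finset.Icc 1 t, ((k : ℝ) + k₀ + 1) / 2 * (2 * β k - ρ k) *
          ‖A (x (k + 1)) - b‖ ^ 2)
      + ((t : ℝ) + k₀ + 1) / 2 *
          qform (P t - β t • ((ContinuousLinearMap.adjoint A).comp A) + μ • 1) (x (t + 1) - xx)
    ≤ (k₀ + 2) / (2 * ρ 1) * ‖lam - lamseq 1‖ ^ 2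
      + (k₀ + 2) / 2 *
          qform (P 1 - β 1 • ((ContinuousLinearMap.adjoint A).comp A)) (x 1 - xx) := by
  set w : ℕ → ℝ := fun k ↦ (k : ℝ) + k₀ + 1 with hw
  set Q : ℕ → _ := fun k ↦ P k - β k • (adjoint A ∘L A) with hQ
  have hstep : ∀ k, 1 ≤ k →
      (w k * (f (x (k + 1)) + g (x (k + 1)) - (f xx + g xx) - ⟪lam, A (x (k + 1)) - b⟫)
        + w k / 2 * (2 * β k - ρ k) * ‖A (x (k + 1)) - b‖ ^ 2)
      + (w k / (2 * ρ k) * ‖lam - lamseq (k + 1)‖ ^ 2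
        + w k / 2 * qform (Q k + μ • 1) (x (k + 1) - xx))
      ≤ w k / (2 * ρ k) * ‖lam - lamseq k‖ ^ 2 + w k / 2 * qform (Q k) (x k - xx) := by
    intro k hk
    obtain ⟨v, hv, hopt⟩ := hiter k hk
    have h := linearizedALM_step_le hfconv hfgrad hflip (strongConvexOn_iff_convex.2 hg)
      (hρpos k hk) (hPsym k hk) (hPge k hk) hv hopt (lam := lam) hxx
    rw [hlam k hk]
    linear_combination w k * h
  have hlink : ∀ k, 1 ≤ k →
      w (k + 1) / (2 * ρ (k + 1)) * ‖lam - lamseq (k + 1)‖ ^ 2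
        + w (k + 1) / 2 * qform (Q (k + 1)) (x (k + 1) - xx)
      ≤ w k / (2 * ρ k) * ‖lam - lamseq (k + 1)‖ ^ 2
        + w k / 2 * qform (Q k + μ • 1) (x (k + 1) - xx) := by
    intro k hk
    have hρk := hρmono (k + 1) (by omega)
    have hPk := hPmono (k + 1) (by omega) (x (k + 1) - xx)
    simp only [Nat.add_sub_cancel, Nat.cast_succ] at hρk hPk
    simp only [hw, hQ, Nat.cast_succ]
    linear_combination (‖lam - lamseq (k + 1)‖ ^ 2 / 2) * hρk + hPk / 2
  have key := sum_Icc_add_le_of_forall_le hstep hlink ht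
  rw [Finset.sum_add_distrib] at key
  have hdual_nonneg : 0 ≤ w t / (2 * ρ t) * ‖lam - lamseq (t + 1)‖ ^ 2 :=
    mul_nonneg (div_nonneg (by positivity) (by linarith [hρpos t ht])) (sq_nonneg _)
  have hw1 : w 1 = k₀ + 2 := by simp only [hw, Nat.cast_one]; ring
  rw [hw1] at key
  linarith

/-- Theorem 2.2 of the paper. -/
theorem stmt_3
    {p N : ℕ}
    (f g : EuclideanSpace ℝ (Fin N) → ℝ)
    (Gf : EuclideanSpace ℝ (Fin N) → EuclideanSpace ℝ (Fin N))
    (Lf : ℝ) (hLf : 0 ≤ Lf)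
    (hfconv : ConvexOn ℝ Set.univ f)
    (hfgrad : ∀ z, HasGradientAt f (Gf z) z)
    (hflip : ∀ u v, ‖Gf u - Gf v‖ ≤ Lf * ‖u - v‖)
    (μ : ℝ) (hμ : 0 < μ)
    (hg : ConvexOn ℝ Set.univ (fun z => g z - μ / 2 * ‖z‖ ^ 2))
    (A : EuclideanSpace ℝ (Fin N) →L[ℝ] EuclideanSpace ℝ (Fin p))
    (b : EuclideanSpace ℝ (Fin p))
    (k₀ : ℝ) (hk₀ : 0 ≤ k₀)
    (β ρ : ℕ → ℝ)
    (P : ℕ → (EuclideanSpace ℝ (Fin N) →L[ℝ] EuclideanSpace ℝ (Fin N)))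
    (hPsym : ∀ k, 1 ≤ k → ∀ u v, inner ℝ (P k u) v = (inner ℝ u (P k v) : ℝ))
    (hρpos : ∀ k, 1 ≤ k → 0 < ρ k)
    (hρβ : ∀ k, 1 ≤ k → ρ k ≤ 2 * β k)
    (hPge : ∀ k, 1 ≤ k → ∀ v,
      0 ≤ qform (P k - β k • ((ContinuousLinearMap.adjoint A).comp A) - Lf • 1) v)
    (hρmono : ∀ k : ℕ, 2 ≤ k →
      ((k : ℝ) + k₀ + 1) / ρ k ≤ ((k : ℝ) + k₀) / ρ (k - 1))
    (hPmono : ∀ k : ℕ, 2 ≤ k → ∀ v,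
      ((k : ℝ) + k₀ + 1) *
          qform (P k - β k • ((ContinuousLinearMap.adjoint A).comp A)) v
        ≤ ((k : ℝ) + k₀) *
          qform (P (k - 1) - β (k - 1) • ((ContinuousLinearMap.adjoint A).comp A) + μ • 1) v)
    (x : ℕ → EuclideanSpace ℝ (Fin N)) (lamseq : ℕ → EuclideanSpace ℝ (Fin p))
    (hiter : ∀ k, 1 ≤ k → ∃ v : EuclideanSpace ℝ (Fin N),
      (∀ z, g (x (k + 1)) + inner ℝ v (z - x (k + 1)) ≤ g z) ∧
      Gf (x k) - ContinuousLinearMap.adjoint A (lamseq k - β k • (A (x k) - b))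
        + v + P k (x (k + 1) - x k) = 0)
    (hlam : ∀ k, 1 ≤ k → lamseq (k + 1) = lamseq k - ρ k • (A (x (k + 1)) - b))
    (t : ℕ) (ht : 1 ≤ t)
    (xx : EuclideanSpace ℝ (Fin N)) (lam : EuclideanSpace ℝ (Fin p))
    (hxx : A xx = b) :
    (∑ k ∈ Finset.Icc 1 t, ((k : ℝ) + k₀ + 1) *
        ((f (x (k + 1)) + g (x (k + 1))) - (f xx + g xx) - inner ℝ lam (A (x (k + 1)) - b)))
      + (∑ k ∈ Finset.Icc 1 t, ((k : ℝ) + k₀ + 1) / 2 * (2 * β k - ρ k) *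
          ‖A (x (k + 1)) - b‖ ^ 2)
      + ((t : ℝ) + k₀ + 1) / 2 *
          qform (P t - β t • ((ContinuousLinearMap.adjoint A).comp A) + μ • 1) (x (t + 1) - xx)
    ≤ (k₀ + 2) / (2 * ρ 1) * ‖lam - lamseq 1‖ ^ 2
      + (k₀ + 2) / 2 *
          qform (P 1 - β 1 • ((ContinuousLinearMap.adjoint A).comp A)) (x 1 - xx) :=
  stmt_3_general f g Gf Lf hfconv hfgrad hflip μ hg A b k₀ hk₀ β ρ P hPsym hρpos hPge hρmono hPmono
    x lamseq hiter hlam t ht xx lam hxx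
end

section
/- Block setting: E := ∏_{i=1}^M ℝ^{n_i} with the ℓ² product inner product, A_i ∈ ℝ^{p×n_i}, Ax := ∑_i A_i x_i, f : E → ℝ convex differentiable which is (m, L_m)-blockwise smooth, g_i : ℝ^{n_i} → ℝ μ-strongly convex with μ ≥ 0, g(x) := ∑_i g_i(x_i), F := f + g, θ := m/M. Let W be a block diagonal operator on E with each diagonal block W_i a symmetric positive semidefinite n_i×n_i matrix. Let x° ∈ E, λ°, r° ∈ ℝ^p, β ∈ ℝ. For each S ∈ 𝒮_m let x⁺(S) ∈ E satisfy: x⁺(S)_i = x°_i for i ∉ S, and for each i ∈ S there is a subgradient v_i of g_i at x⁺(S)_i with ∇_i f(x°) + v_i − A_iᵀ(λ° − β r°) + W_i(x⁺(S)_i − x°_i) = 0. Then for every x ∈ E: E_S[ F(x⁺) − F(x) + (μ/2)‖x⁺ − x‖² − ⟨A(x⁺ − x), λ° − β r°⟩ ] ≤ (1 − θ)( F(x°) − F(x) + (μ/2)‖x° − x‖² − ⟨A(x° − x), λ° − β r°⟩ ) − (1/2) E_S[ ‖x⁺ − x‖²_W − ‖x° − x‖²_W + ‖x⁺ − x°‖²_{W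 − L_m I} ], where E_S denotes the average over all S ∈ 𝒮_m. -/
/-!
Only the blocks in `S` move, so `m`-blockwise smoothness bounds `f (x⁺ S)` by its linearization
at `x°`. On each moved block, strong convexity of `gᵢ` at the subgradient supplied by the
optimality condition turns the linearized objective into `⟨∇ᵢ f(x°), xᵢ - x°ᵢ⟩` plus the
`W`-terms (three-point identity); an unmoved block contributes its value at `x°`. Averaging over
`S ∈ 𝒮_m`, every block is moved with probability `θ = m / M`, and convexity of `f` bounds
`θ ⟨∇f(x°), x - x°⟩` by `θ (f x - f x°)`.
-/

/-- The product space `∏ i, ℝ^{n i}` with the ℓ² product inner product. -/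
abbrev blockE (M : ℕ) (n : Fin M → ℕ) : Type :=
  PiLp 2 (fun i : Fin M => EuclideanSpace ℝ (Fin (n i)))

open Finset Filter Topology

section Convexity

variable {H : Type*} [NormedAddCommGroup H] [InnerProductSpace ℝ H]

theorem ConvexOn.add_inner_le_of_hasGradientAt_s6 [CompleteSpace H] {f : H → ℝ}
    (hf : ConvexOn ℝ Set.univ f) {x G : H} (hG : HasGradientAt f G x) (y : H) :
    f x + inner ℝ G (y - x) ≤ f y := by
  have hline : ConvexOn ℝ Set.univ (f ∘ AffineMap.lineMap (k := ℝ) x y) := hf.comp_affineMap _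
  have hderiv : HasDerivAt (f ∘ AffineMap.lineMap (k := ℝ) x y) (inner ℝ G (y - x)) 0 := by
    have hG' := hG.hasFDerivAt
    rw [← AffineMap.lineMap_apply_zero (k := ℝ) x y] at hG'
    simpa using hG'.comp_hasDerivAt 0 AffineMap.hasDerivAt_lineMap
  have hslope := hline.le_slope_of_hasDerivAt (Set.mem_univ 0) (Set.mem_univ 1) zero_lt_one hderiv
  simp only [slope, sub_zero, inv_one, Function.comp_apply, AffineMap.lineMap_apply_one,
    AffineMap.lineMap_apply_zero, vsub_eq_sub, smul_eq_mul, one_mul] at hslope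
  linarith

theorem StrongConvexOn.add_inner_add_le_of_subgradient {g : H → ℝ} {μ : ℝ}
    (hg : StrongConvexOn Set.univ μ g) {y v : H} (hv : ∀ z, g y + inner ℝ v (z - y) ≤ g z)
    (z : H) : g y + inner ℝ v (z - y) + μ / 2 * ‖z - y‖ ^ 2 ≤ g z := by
  have hsegment : ∀ t ∈ Set.Ioc (0 : ℝ) 1,
      g y + inner ℝ v (z - y) + (1 - t) * (μ / 2 * ‖z - y‖ ^ 2) ≤ g z := by
    rintro t ⟨ht0, ht1⟩
    have hconv := hg.2 (Set.mem_univ z) (Set.mem_univ y) ht0.le (sub_nonneg.2 ht1)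
      (add_sub_cancel t 1)
    have hsub := hv (t • z + (1 - t) • y)
    rw [show t • z + (1 - t) • y - y = t • (z - y) by module, real_inner_smul_right] at hsub
    simp only [smul_eq_mul] at hconv
    nlinarith
  have hlim : Tendsto (fun t : ℝ => g y + inner ℝ v (z - y) + (1 - t) * (μ / 2 * ‖z - y‖ ^ 2))
      (𝓝[>] 0) (𝓝 (g y + inner ℝ v (z - y) + μ / 2 * ‖z - y‖ ^ 2)) := by
    refine tendsto_nhdsWithin_of_tendsto_nhds ?_
    exact (by fun_prop : Continuous fun t : ℝ =>
      g y + inner ℝ v (z - y) + (1 - t) * (μ / 2 * ‖z - y‖ ^ 2)).tendsto' 0 _ (by simp)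
  exact le_of_tendsto hlim (eventually_of_mem (Ioc_mem_nhdsGT zero_lt_one) hsegment)

theorem LinearMap.IsSymmetric.two_mul_inner_map_sub_eq {T : H →ₗ[ℝ] H} (hT : T.IsSymmetric)
    (b c : H) :
    2 * inner ℝ (T (b - c)) b
      = inner ℝ b (T b) - inner ℝ c (T c) + inner ℝ (b - c) (T (b - c)) := by
  simp only [map_sub, inner_sub_left, inner_sub_right]
  linarith [hT b b, hT c b, real_inner_comm (T c) b]

theorem StrongConvexOn.prox_linear_step_le [CompleteSpace H] {Y : Type*} [NormedAddCommGroup Y]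
    [InnerProductSpace ℝ Y] [CompleteSpace Y] {g : H → ℝ} {μ : ℝ}
    (hg : StrongConvexOn Set.univ μ g) (A : H →L[ℝ] Y) {W : H →L[ℝ] H}
    (hW : (W : H →ₗ[ℝ] H).IsSymmetric) {d y₀ y₁ v : H} {ℓ : Y}
    (hv : ∀ z, g y₁ + inner ℝ v (z - y₁) ≤ g z)
    (hopt : d + v - ContinuousLinearMap.adjoint A ℓ + W (y₁ - y₀) = 0) (y : H) :
    g y₁ - g y + μ / 2 * ‖y₁ - y‖ ^ 2 - inner ℝ (A y₁ - A y) ℓ + inner ℝ d (y₁ - y₀)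
        + 1 / 2 * (inner ℝ (y₁ - y) (W (y₁ - y)) - inner ℝ (y₀ - y) (W (y₀ - y))
          + inner ℝ (y₁ - y₀) (W (y₁ - y₀)))
      ≤ inner ℝ d (y - y₀) := by
  have hv_eq : v = ContinuousLinearMap.adjoint A ℓ - d - W (y₁ - y₀) := by
    rw [← sub_eq_zero, ← hopt]; abel
  have hsub := hg.add_inner_add_le_of_subgradient hv y
  have hW3 := hW.two_mul_inner_map_sub_eq (y₁ - y) (y₀ - y)
  rw [sub_sub_sub_cancel_right] at hW3
  rw [hv_eq, norm_sub_rev] at hsub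
  simp only [inner_sub_left, ContinuousLinearMap.adjoint_inner_left] at hsub
  simp only [ContinuousLinearMap.coe_coe] at hW3
  have hA : inner ℝ ℓ (A (y - y₁)) = -inner ℝ (A y₁ - A y) ℓ := by
    rw [real_inner_comm, ← inner_neg_left, ← map_sub, ← map_neg, neg_sub]
  have hd : inner ℝ d (y - y₁) + inner ℝ d (y₁ - y₀) = inner ℝ d (y - y₀) := by
    rw [← inner_add_right, sub_add_sub_cancel]
  have hWy : inner ℝ (W (y₁ - y₀)) (y - y₁) = -inner ℝ (W (y₁ - y₀)) (y₁ - y) := by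
    rw [← inner_neg_right, neg_sub]
  linarith

end Convexity

section Block

variable {M p : ℕ} {n : Fin M → ℕ}
  (A : ∀ i : Fin M, EuclideanSpace ℝ (Fin (n i)) →L[ℝ] EuclideanSpace ℝ (Fin p))
  (g : ∀ i : Fin M, EuclideanSpace ℝ (Fin (n i)) → ℝ) (μ : ℝ) (ℓ : EuclideanSpace ℝ (Fin p))
  (x : blockE M n)

noncomputable def blockGap (i : Fin M) (y : EuclideanSpace ℝ (Fin (n i))) : ℝ :=
  g i y - g i (x i) + μ / 2 * ‖y - x i‖ ^ 2 - inner ℝ (A i y - A i (x i)) ℓ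

theorem sum_blockGap_eq (u : blockE M n) :
    ∑ i, g i (u i) - ∑ i, g i (x i) + μ / 2 * ‖u - x‖ ^ 2
        - inner ℝ ((∑ i, A i (u i)) - ∑ i, A i (x i)) ℓ
      = ∑ i, blockGap A g μ ℓ x i (u i) := by
  rw [PiLp.norm_sq_eq_of_L2]
  simp only [blockGap, inner_sub_left, sum_inner, sum_add_distrib, sum_sub_distrib, mul_sum,
    PiLp.sub_apply]

variable {A g μ ℓ x}

theorem sum_blockGap_add_le (hg : ∀ i, StrongConvexOn Set.univ μ (g i))
    {W : ∀ i : Fin M, EuclideanSpace ℝ (Fin (n i)) →L[ℝ] EuclideanSpace ℝ (Fin (n i))}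
    (hW : ∀ i, (W i : EuclideanSpace ℝ (Fin (n i)) →ₗ[ℝ] EuclideanSpace ℝ (Fin (n i))).IsSymmetric)
    {d x₀ u : blockE M n} {S : Finset (Fin M)} (hfix : ∀ i ∉ S, u i = x₀ i)
    (hopt : ∀ i ∈ S, ∃ v : EuclideanSpace ℝ (Fin (n i)),
      (∀ z, g i (u i) + inner ℝ v (z - u i) ≤ g i z) ∧
      d i + v - ContinuousLinearMap.adjoint (A i) ℓ + W i (u i - x₀ i) = 0) :
    ∑ i, blockGap A g μ ℓ x i (u i) + inner ℝ d (u - x₀)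
        + 1 / 2 * (∑ i, inner ℝ ((u - x) i) (W i ((u - x) i))
          - ∑ i, inner ℝ ((x₀ - x) i) (W i ((x₀ - x) i))
          + ∑ i, inner ℝ ((u - x₀) i) (W i ((u - x₀) i)))
      ≤ ∑ i ∈ S, inner ℝ (d i) (x i - x₀ i) + ∑ i ∈ Sᶜ, blockGap A g μ ℓ x i (x₀ i) := by
  have hblock (i : Fin M) :
      blockGap A g μ ℓ x i (u i) + inner ℝ (d i) (u i - x₀ i)
          + 1 / 2 * (inner ℝ (u i - x i) (W i (u i - x i))
            - inner ℝ (x₀ i - x i) (W i (x₀ i - x i))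
            + inner ℝ (u i - x₀ i) (W i (u i - x₀ i)))
        ≤ if i ∈ S then inner ℝ (d i) (x i - x₀ i) else blockGap A g μ ℓ x i (x₀ i) := by
    split_ifs with hi
    · obtain ⟨v, hv, hvopt⟩ := hopt i hi
      exact (hg i).prox_linear_step_le (A i) (hW i) hv hvopt (x i)
    · simp [hfix i hi]
  calc _ = ∑ i, (blockGap A g μ ℓ x i (u i) + inner ℝ (d i) (u i - x₀ i)
          + 1 / 2 * (inner ℝ (u i - x i) (W i (u i - x i))
            - inner ℝ (x₀ i - x i) (W i (x₀ i - x i))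
            + inner ℝ (u i - x₀ i) (W i (u i - x₀ i)))) := by
        rw [PiLp.inner_apply d]
        simp only [PiLp.sub_apply, sum_add_distrib, sum_sub_distrib, ← mul_sum]
    _ ≤ _ := sum_le_sum fun i _ => hblock i
    _ = _ := by rw [sum_ite, filter_mem_eq_inter, univ_inter, filter_notMem_eq_sdiff,
      ← compl_eq_univ_sdiff]

end Block

section Counting

variable {ι : Type*} [Fintype ι]

theorem card_powersetCard_univ_ne_zero {m : ℕ} (hm : m ≤ Fintype.card ι) :
    (#(powersetCard m (univ : Finset ι)) : ℝ) ≠ 0 := by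
  exact_mod_cast (powersetCard_nonempty.2 (by simpa using hm)).card_ne_zero

variable [DecidableEq ι]

theorem card_filter_mem_powersetCard_mul_card (m : ℕ) (i : ι) :
    #{S ∈ powersetCard m (univ : Finset ι) | i ∈ S} * Fintype.card ι
      = m * (Fintype.card ι).choose m := by
  rcases m with _ | k
  · simp
  · have hfilter : {S ∈ powersetCard (k + 1) (univ : Finset ι) | i ∈ S}
        = {S ∈ powersetCard (k + 1) (univ : Finset ι) | {i} ⊆ S} := by simp
    obtain ⟨N, hN⟩ : ∃ N, Fintype.card ι = N + 1 :=
      Nat.exists_eq_add_one.2 (Fintype.card_pos_iff.2 ⟨i⟩)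
    rw [hfilter, card_filter_powersetCard_subset _ _ _ (subset_univ _) (by simp), card_univ,
      card_singleton, hN, Nat.add_sub_cancel, Nat.add_sub_cancel, mul_comm,
      Nat.add_one_mul_choose_eq, mul_comm]

theorem average_powersetCard_sum_mem {m : ℕ} (hm : m ≤ Fintype.card ι) (a : ι → ℝ) :
    (#(powersetCard m (univ : Finset ι)) : ℝ)⁻¹ * ∑ S ∈ powersetCard m univ, ∑ i ∈ S, a i
      = m / Fintype.card ι * ∑ i, a i := by
  have hswap : ∑ S ∈ powersetCard m univ, ∑ i ∈ S, a i
      = ∑ i, (#{S ∈ powersetCard m univ | i ∈ S} : ℝ) * a i := by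
    rw [sum_comm' (t' := univ) (s' := fun i => {S ∈ powersetCard m univ | i ∈ S})
      (by simp)]
    simp only [sum_const, nsmul_eq_mul]
  have hcount (i : ι) : (#{S ∈ powersetCard m univ | i ∈ S} : ℝ) * Fintype.card ι
      = m * #(powersetCard m (univ : Finset ι)) := by
    rw [card_powersetCard, card_univ]
    exact_mod_cast card_filter_mem_powersetCard_mul_card m i
  rw [hswap]
  rcases isEmpty_or_nonempty ι with hι | hι
  · simp
  have hM : (Fintype.card ι : ℝ) ≠ 0 := by positivity
  have hS := card_powersetCard_univ_ne_zero hm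
  rw [mul_sum, mul_sum]
  refine sum_congr rfl fun i _ => ?_
  rw [eq_div_iff hM |>.mpr (hcount i)]
  field_simp

theorem average_powersetCard_sum_compl {m : ℕ} (hm : m ≤ Fintype.card ι) (b : ι → ℝ) :
    (#(powersetCard m (univ : Finset ι)) : ℝ)⁻¹ * ∑ S ∈ powersetCard m univ, ∑ i ∈ Sᶜ, b i
      = (1 - m / Fintype.card ι) * ∑ i, b i := by
  have hS := card_powersetCard_univ_ne_zero hm
  have hsplit (S : Finset ι) : ∑ i ∈ Sᶜ, b i = ∑ i, b i - ∑ i ∈ S, b i :=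
    eq_sub_of_add_eq (sum_compl_add_sum S b)
  rw [sum_congr rfl fun S _ => hsplit S, sum_sub_distrib, mul_sub,
    average_powersetCard_sum_mem hm, sum_const, nsmul_eq_mul, ← mul_assoc, inv_mul_cancel₀ hS]
  ring

theorem average_powersetCard_le {m : ℕ} (hm : m ≤ Fintype.card ι) {Φ w : Finset ι → ℝ} {c : ℝ}
    {a b : ι → ℝ}
    (h : ∀ S ∈ powersetCard m univ, Φ S ≤ c + ∑ i ∈ S, a i + ∑ i ∈ Sᶜ, b i + w S) :
    (#(powersetCard m (univ : Finset ι)) : ℝ)⁻¹ * ∑ S ∈ powersetCard m univ, Φ S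
      ≤ c + m / Fintype.card ι * ∑ i, a i + (1 - m / Fintype.card ι) * ∑ i, b i
        + (#(powersetCard m (univ : Finset ι)) : ℝ)⁻¹ * ∑ S ∈ powersetCard m univ, w S := by
  have hS := card_powersetCard_univ_ne_zero hm
  calc _ ≤ (#(powersetCard m (univ : Finset ι)) : ℝ)⁻¹
        * ∑ S ∈ powersetCard m univ, (c + ∑ i ∈ S, a i + ∑ i ∈ Sᶜ, b i + w S) :=
        mul_le_mul_of_nonneg_left (sum_le_sum h) (by positivity)
    _ = _ := by
      rw [sum_add_distrib, sum_add_distrib, sum_add_distrib, sum_const, nsmul_eq_mul, mul_add,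
        mul_add, mul_add, average_powersetCard_sum_mem hm, average_powersetCard_sum_compl hm,
        ← mul_assoc, inv_mul_cancel₀ hS, one_mul]

end Counting

theorem stmt_6_general
    {M m p : ℕ} (hmM : m ≤ M) {n : Fin M → ℕ}
    (A : ∀ i : Fin M, EuclideanSpace ℝ (Fin (n i)) →L[ℝ] EuclideanSpace ℝ (Fin p))
    (f : blockE M n → ℝ) (Gf : blockE M n → blockE M n)
    (hfconv : ConvexOn ℝ Set.univ f)
    (hfgrad : ∀ z, HasGradientAt f (Gf z) z)
    (Lm : ℝ)
    (hfsmooth : ∀ u w : blockE M n, ∀ S : Finset (Fin M), S.card ≤ m →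
      (∀ i ∉ S, u i = w i) →
      f u ≤ f w + inner ℝ (Gf w) (u - w) + Lm / 2 * ‖u - w‖ ^ 2)
    (gi : ∀ i : Fin M, EuclideanSpace ℝ (Fin (n i)) → ℝ)
    (μ : ℝ)
    (hgi : ∀ i, ConvexOn ℝ Set.univ (fun z => gi i z - μ / 2 * ‖z‖ ^ 2))
    (W : ∀ i : Fin M,
      EuclideanSpace ℝ (Fin (n i)) →L[ℝ] EuclideanSpace ℝ (Fin (n i)))
    (hWsym : ∀ i, ∀ u v, inner ℝ (W i u) v = (inner ℝ u (W i v) : ℝ))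
    (x0 : blockE M n) (lam0 r0 : EuclideanSpace ℝ (Fin p)) (β : ℝ)
    (xplus : Finset (Fin M) → blockE M n)
    (hfix : ∀ S ∈ Finset.powersetCard m (Finset.univ : Finset (Fin M)),
      ∀ i ∉ S, xplus S i = x0 i)
    (hopt : ∀ S ∈ Finset.powersetCard m (Finset.univ : Finset (Fin M)),
      ∀ i ∈ S, ∃ v : EuclideanSpace ℝ (Fin (n i)),
        (∀ z, gi i (xplus S i) + inner ℝ v (z - xplus S i) ≤ gi i z) ∧
        Gf x0 i + v - ContinuousLinearMap.adjoint (A i) (lam0 - β • r0)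
          + W i (xplus S i - x0 i) = 0)
    (x : blockE M n) :
    ((Finset.powersetCard m (Finset.univ : Finset (Fin M))).card : ℝ)⁻¹ *
      ∑ S ∈ Finset.powersetCard m (Finset.univ : Finset (Fin M)),
        ((f (xplus S) + ∑ i, gi i (xplus S i)) - (f x + ∑ i, gi i (x i))
          + μ / 2 * ‖xplus S - x‖ ^ 2
          - inner ℝ ((∑ i, A i (xplus S i)) - ∑ i, A i (x i)) (lam0 - β • r0))
    ≤ (1 - (m : ℝ) / M) *
        ((f x0 + ∑ i, gi i (x0 i)) - (f x + ∑ i, gi i (x i))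
          + μ / 2 * ‖x0 - x‖ ^ 2
          - inner ℝ ((∑ i, A i (x0 i)) - ∑ i, A i (x i)) (lam0 - β • r0))
      - 1 / 2 * (((Finset.powersetCard m (Finset.univ : Finset (Fin M))).card : ℝ)⁻¹ *
          ∑ S ∈ Finset.powersetCard m (Finset.univ : Finset (Fin M)),
            ((∑ i, (inner ℝ ((xplus S - x) i) (W i ((xplus S - x) i)) : ℝ))
              - (∑ i, (inner ℝ ((x0 - x) i) (W i ((x0 - x) i)) : ℝ))
              + ((∑ i, (inner ℝ ((xplus S - x0) i) (W i ((xplus S - x0) i)) : ℝ))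
                  - Lm * ‖xplus S - x0‖ ^ 2))) := by
  set ℓ := lam0 - β • r0
  have hg (i : Fin M) : StrongConvexOn Set.univ μ (gi i) := strongConvexOn_iff_convex.2 (hgi i)
  refine (average_powersetCard_le (by simpa using hmM)
    (c := f x0 - f x) (a := fun i => inner ℝ (Gf x0 i) (x i - x0 i))
    (b := fun i => blockGap A gi μ ℓ x i (x0 i))
    (w := fun S => -(1 / 2 * ((∑ i, (inner ℝ ((xplus S - x) i) (W i ((xplus S - x) i)) : ℝ))
              - (∑ i, (inner ℝ ((x0 - x) i) (W i ((x0 - x) i)) : ℝ))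
              + ((∑ i, (inner ℝ ((xplus S - x0) i) (W i ((xplus S - x0) i)) : ℝ))
                  - Lm * ‖xplus S - x0‖ ^ 2)))) fun S hS => ?_).trans ?_
  · have hsmooth := hfsmooth (xplus S) x0 S (mem_powersetCard.1 hS).2.le (hfix S hS)
    have hblocks := sum_blockGap_add_le hg hWsym (hfix S hS) (hopt S hS) (x := x)
    have hgap := sum_blockGap_eq A gi μ ℓ x (xplus S)
    linarith
  rw [sum_neg_distrib, ← mul_sum, Fintype.card_fin]
  have hgrad := hfconv.add_inner_le_of_hasGradientAt_s6 (hfgrad x0) x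
  rw [PiLp.inner_apply (Gf x0)] at hgrad
  simp only [PiLp.sub_apply] at hgrad
  have hθ₀ : 0 ≤ (m : ℝ) / M := by positivity
  have hgap0 := sum_blockGap_eq A gi μ ℓ x x0
  nlinarith [mul_le_mul_of_nonneg_left hgrad hθ₀]

/-- Lemma A.1 of the paper (basic block inequality). -/
theorem stmt_6
    {M m p : ℕ} (hm : 1 ≤ m) (hmM : m ≤ M) {n : Fin M → ℕ}
    (A : ∀ i : Fin M, EuclideanSpace ℝ (Fin (n i)) →L[ℝ] EuclideanSpace ℝ (Fin p))
    (f : blockE M n → ℝ) (Gf : blockE M n → blockE M n)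
    (hfconv : ConvexOn ℝ Set.univ f)
    (hfgrad : ∀ z, HasGradientAt f (Gf z) z)
    (Lm : ℝ)
    (hfsmooth : ∀ u w : blockE M n, ∀ S : Finset (Fin M), S.card ≤ m →
      (∀ i ∉ S, u i = w i) →
      f u ≤ f w + inner ℝ (Gf w) (u - w) + Lm / 2 * ‖u - w‖ ^ 2)
    (gi : ∀ i : Fin M, EuclideanSpace ℝ (Fin (n i)) → ℝ)
    (μ : ℝ) (hμ : 0 ≤ μ)
    (hgi : ∀ i, ConvexOn ℝ Set.univ (fun z => gi i z - μ / 2 * ‖z‖ ^ 2))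
    (W : ∀ i : Fin M,
      EuclideanSpace ℝ (Fin (n i)) →L[ℝ] EuclideanSpace ℝ (Fin (n i)))
    (hWsym : ∀ i, ∀ u v, inner ℝ (W i u) v = (inner ℝ u (W i v) : ℝ))
    (hWpsd : ∀ i, ∀ v, (0 : ℝ) ≤ inner ℝ v (W i v))
    (x0 : blockE M n) (lam0 r0 : EuclideanSpace ℝ (Fin p)) (β : ℝ)
    (xplus : Finset (Fin M) → blockE M n)
    (hfix : ∀ S ∈ Finset.powersetCard m (Finset.univ : Finset (Fin M)),
      ∀ i ∉ S, xplus S i = x0 i)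
    (hopt : ∀ S ∈ Finset.powersetCard m (Finset.univ : Finset (Fin M)),
      ∀ i ∈ S, ∃ v : EuclideanSpace ℝ (Fin (n i)),
        (∀ z, gi i (xplus S i) + inner ℝ v (z - xplus S i) ≤ gi i z) ∧
        Gf x0 i + v - ContinuousLinearMap.adjoint (A i) (lam0 - β • r0)
          + W i (xplus S i - x0 i) = 0)
    (x : blockE M n) :
    ((Finset.powersetCard m (Finset.univ : Finset (Fin M))).card : ℝ)⁻¹ *
      ∑ S ∈ Finset.powersetCard m (Finset.univ : Finset (Fin M)),
        ((f (xplus S) + ∑ i, gi i (xplus S i)) - (f x + ∑ i, gi i (x i))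
          + μ / 2 * ‖xplus S - x‖ ^ 2
          - inner ℝ ((∑ i, A i (xplus S i)) - ∑ i, A i (x i)) (lam0 - β • r0))
    ≤ (1 - (m : ℝ) / M) *
        ((f x0 + ∑ i, gi i (x0 i)) - (f x + ∑ i, gi i (x i))
          + μ / 2 * ‖x0 - x‖ ^ 2
          - inner ℝ ((∑ i, A i (x0 i)) - ∑ i, A i (x i)) (lam0 - β • r0))
      - 1 / 2 * (((Finset.powersetCard m (Finset.univ : Finset (Fin M))).card : ℝ)⁻¹ *
          ∑ S ∈ Finset.powersetCard m (Finset.univ : Finset (Fin M)),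
            ((∑ i, (inner ℝ ((xplus S - x) i) (W i ((xplus S - x) i)) : ℝ))
              - (∑ i, (inner ℝ ((x0 - x) i) (W i ((x0 - x) i)) : ℝ))
              + ((∑ i, (inner ℝ ((xplus S - x0) i) (W i ((xplus S - x0) i)) : ℝ))
                  - Lm * ‖xplus S - x0‖ ^ 2))) :=
  stmt_6_general hmM A f Gf hfconv hfgrad Lm hfsmooth gi μ hgi W hWsym x0 lam0 r0 β xplus hfix hopt
    x
end

section
/- Let 1 ≤ m ≤ M be integers, θ := m/M, μ > 0, L_m ≥ 0, ρ ≥ 1, t ≥ 2 an integer, and A a nonzero real p×N matrix with spectral norm ‖A‖₂. Set k₀ := 4/θ + 2L_m/(θμ); β_k := μ(θk + 2 + θ)/(2ρ‖A‖₂²) for k ≥ 1; ρ_k := θβ_k/(6 − 5θ) for 1 ≤ k ≤ t−1 and ρ_t := (t+k₀+1)ρ_{t−1}/(θ(t+k₀+1) − 1); η_k := ρβ_k‖A‖₂² + L_m for k ≥ 1. Then the following all hold: (a) θ(k+k₀+1) ≥ 1 for all k ≥ 2; (b) (β_{k−1} − ρ_{k−1})(k+k₀) ≥ (1−θ)(k+k₀+1)β_k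 for 2 ≤ k ≤ t; (c) (θ(k+k₀+1) − 1)/ρ_{k−1} ≥ (θ(k+k₀+2) − 1)/ρ_k for 2 ≤ k ≤ t−1; (d) (θ(t+k₀+1) − 1)/ρ_{t−1} ≥ (t+k₀+1)/ρ_t; (e) β_k(k+k₀+1) ≥ β_{k−1}(k+k₀) for 2 ≤ k ≤ t; (f) (k+k₀+1)(η_k − L_m) I ⪰ β_k(k+k₀+1) AᵀA for 1 ≤ k ≤ t; (g) (k+k₀)η_{k−1} + μ(θ(k+k₀+1) − 1) ≥ (k+k₀+1)η_k for 2 ≤ k ≤ t. -/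
/-!
With `c := μ / (2ρ‖A‖²)` the sequence `β_k = c (θk + 2 + θ)` is affine in `k`, so
`β_{k-1} = c (θk + 2)`; for `k < t` the sequence `ρ_k` is the fixed multiple `θ / (6 - 5θ)` of `β_k`,
and `ρ β_k ‖A‖² = (μ / 2)(θk + 2 + θ)`. Each inequality then becomes an elementary inequality in
`k`, `k₀` and `θ`, which holds because `θ k₀ = 4 + 2 L_m / μ ≥ 4`; part (d) is even an identity.
-/

lemma add_div_add_le_div {a b c : ℝ} (hb : 0 < b) (hc : 0 ≤ c) (hba : b ≤ a) :
    (a + c) / (b + c) ≤ a / b := by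
  rw [div_le_div_iff₀ (by positivity) hb]
  nlinarith

lemma mul_norm_apply_sq_le {E F : Type*} [SeminormedAddCommGroup E] [SeminormedAddCommGroup F]
    [NormedSpace ℝ E] [NormedSpace ℝ F] (A : E →L[ℝ] F) {ρ b : ℝ} (hρ : 1 ≤ ρ) (hb : 0 ≤ b)
    (v : E) : b * ‖A v‖ ^ 2 ≤ ρ * b * ‖A‖ ^ 2 * ‖v‖ ^ 2 := by
  have hAv : ‖A v‖ ^ 2 ≤ ‖A‖ ^ 2 * ‖v‖ ^ 2 := by
    rw [← mul_pow]
    exact pow_le_pow_left₀ (norm_nonneg _) (A.le_opNorm v) 2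
  calc b * ‖A v‖ ^ 2 ≤ b * (‖A‖ ^ 2 * ‖v‖ ^ 2) := by gcongr
    _ ≤ ρ * (b * (‖A‖ ^ 2 * ‖v‖ ^ 2)) := le_mul_of_one_le_left (by positivity) hρ
    _ = ρ * b * ‖A‖ ^ 2 * ‖v‖ ^ 2 := by ring

section Schedule

variable {θ c k₀ : ℝ} {t : ℕ} {β ρseq : ℕ → ℝ}

lemma beta_pos (hθ : 0 ≤ θ) (hc : 0 < c) (hβ : ∀ k : ℕ, 1 ≤ k → β k = c * (θ * k + 2 + θ))
    {k : ℕ} (hk : 1 ≤ k) : 0 < β k := by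
  rw [hβ k hk]
  have := mul_nonneg hθ k.cast_nonneg
  exact mul_pos hc (by linarith)

lemma beta_sub_one (hβ : ∀ k : ℕ, 1 ≤ k → β k = c * (θ * k + 2 + θ)) {k : ℕ} (hk : 2 ≤ k) :
    β (k - 1) = c * (θ * k + 2) := by
  rw [hβ (k - 1) (by omega), Nat.cast_pred (by omega)]
  ring

lemma six_sub_mul_le (hθ : 0 ≤ θ) (hk₀ : 4 ≤ θ * k₀) {x : ℝ} (hx : 0 ≤ x) :
    (6 - 5 * θ) * (x + k₀ + 1) * (θ * x + 2 + θ) ≤ 6 * (θ * x + 2) * (x + k₀) := by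
  -- with `T := θ (x + k₀ + 1) ≥ 4` the difference is `θx (5T - 6) + 4 (T - 3) + 5θT`
  have hT : 4 ≤ θ * (x + k₀ + 1) := by nlinarith
  nlinarith [mul_nonneg (mul_nonneg hθ hx) (by linarith : (0 : ℝ) ≤ 5 * (θ * (x + k₀ + 1)) - 6),
    mul_nonneg hθ (by linarith : (0 : ℝ) ≤ θ * (x + k₀ + 1))]

lemma one_sub_mul_beta_le (hθ0 : 0 ≤ θ) (hθ1 : θ ≤ 1) (hc : 0 ≤ c) (hk₀ : 4 ≤ θ * k₀)
    (hβ : ∀ k : ℕ, 1 ≤ k → β k = c * (θ * k + 2 + θ))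
    (hρ : ∀ k : ℕ, 1 ≤ k → k ≤ t - 1 → ρseq k = θ * β k / (6 - 5 * θ))
    {k : ℕ} (hk : 2 ≤ k) (hkt : k ≤ t) :
    (1 - θ) * ((k : ℝ) + k₀ + 1) * β k ≤ (β (k - 1) - ρseq (k - 1)) * ((k : ℝ) + k₀) := by
  have h6 : (0 : ℝ) < 6 - 5 * θ := by linarith
  have h6inv : (6 - 5 * θ) * (6 - 5 * θ)⁻¹ = 1 := mul_inv_cancel₀ h6.ne'
  have hsub : β (k - 1) - ρseq (k - 1) = (1 - θ) * c / (6 - 5 * θ) * (6 * (θ * k + 2)) := by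
    rw [hρ (k - 1) (by omega) (by omega), beta_sub_one hβ hk]
    linear_combination (-c * (θ * k + 2)) * h6inv
  have hpoly := mul_le_mul_of_nonneg_left (six_sub_mul_le hθ0 hk₀ k.cast_nonneg)
    (div_nonneg (mul_nonneg (sub_nonneg.mpr hθ1) hc) h6.le)
  rw [hsub, hβ k (by omega)]
  calc (1 - θ) * ((k : ℝ) + k₀ + 1) * (c * (θ * k + 2 + θ))
      = (1 - θ) * c / (6 - 5 * θ) * ((6 - 5 * θ) * (k + k₀ + 1) * (θ * k + 2 + θ)) := by
        linear_combination (-(1 - θ) * c * (k + k₀ + 1) * (θ * k + 2 + θ)) * h6inv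
    _ ≤ (1 - θ) * c / (6 - 5 * θ) * (6 * (θ * k + 2) * (k + k₀)) := hpoly
    _ = (1 - θ) * c / (6 - 5 * θ) * (6 * (θ * k + 2)) * (k + k₀) := by ring

lemma div_rho_le_div_rho_sub_one (hθ0 : 0 < θ) (hθ1 : θ ≤ 1) (hc : 0 < c) (hk₀ : 4 ≤ θ * k₀)
    (hβ : ∀ k : ℕ, 1 ≤ k → β k = c * (θ * k + 2 + θ))
    (hρ : ∀ k : ℕ, 1 ≤ k → k ≤ t - 1 → ρseq k = θ * β k / (6 - 5 * θ))
    {k : ℕ} (hk : 2 ≤ k) (hkt : k ≤ t - 1) :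
    (θ * ((k : ℝ) + k₀ + 2) - 1) / ρseq k ≤ (θ * ((k : ℝ) + k₀ + 1) - 1) / ρseq (k - 1) := by
  have hs : 0 < θ * c / (6 - 5 * θ) := div_pos (mul_pos hθ0 hc) (by linarith)
  have hρk : ρseq k = θ * c / (6 - 5 * θ) * (θ * k + 2 + θ) := by
    rw [hρ k (by omega) hkt, hβ k (by omega)]
    ring
  have hρk' : ρseq (k - 1) = θ * c / (6 - 5 * θ) * (θ * k + 2) := by
    rw [hρ (k - 1) (by omega) (by omega), beta_sub_one hβ hk]
    ring
  have hnum : θ * ((k : ℝ) + k₀ + 2) - 1 = θ * ((k : ℝ) + k₀ + 1) - 1 + θ := by ring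
  rw [hρk, hρk', hnum, div_mul_eq_div_div_swap, div_mul_eq_div_div_swap]
  have := mul_nonneg hθ0.le k.cast_nonneg
  exact div_le_div_of_nonneg_right (add_div_add_le_div (by linarith) hθ0.le (by linarith)) hs.le

lemma beta_sub_one_mul_le (hθ : 0 ≤ θ) (hc : 0 ≤ c) (hk₀ : 0 ≤ k₀)
    (hβ : ∀ k : ℕ, 1 ≤ k → β k = c * (θ * k + 2 + θ)) {k : ℕ} (hk : 2 ≤ k) :
    β (k - 1) * ((k : ℝ) + k₀) ≤ β k * ((k : ℝ) + k₀ + 1) := by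
  rw [beta_sub_one hβ hk, hβ k (by omega)]
  have := mul_nonneg hθ k.cast_nonneg
  gcongr c * ?_ * ?_ <;> linarith

lemma mul_eta_le {μ L ρ a : ℝ} {η : ℕ → ℝ} (hμ : 0 < μ) (hθ : 0 ≤ θ)
    (hk₀ : θ * k₀ = 4 + 2 * L / μ) (hρc : ρ * c * a = μ / 2)
    (hβ : ∀ k : ℕ, 1 ≤ k → β k = c * (θ * k + 2 + θ))
    (hη : ∀ k : ℕ, 1 ≤ k → η k = ρ * β k * a + L) {k : ℕ} (hk : 2 ≤ k) :
    ((k : ℝ) + k₀ + 1) * η k ≤ ((k : ℝ) + k₀) * η (k - 1) + μ * (θ * ((k : ℝ) + k₀ + 1) - 1) := by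
  have hμk₀ : μ * (θ * k₀) = 4 * μ + 2 * L := by
    rw [hk₀]
    field_simp
  have hηc (y : ℝ) : ρ * (c * y) * a + L = μ / 2 * y + L := by
    rw [← hρc]
    ring
  rw [hη k (by omega), hη (k - 1) (by omega), hβ k (by omega), beta_sub_one hβ hk, hηc, hηc]
  -- the slack is exactly `μθ / 2`
  linear_combination (-1 / 2 : ℝ) * hμk₀ + (1 / 2 : ℝ) * mul_nonneg hμ.le hθ

end Schedule

theorem stmt_8_general
    {M m p N : ℕ} (hm : 1 ≤ m) (hmM : m ≤ M)
    (θ : ℝ) (hθ : θ = (m : ℝ) / M)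
    (μ Lm ρ : ℝ) (hμ : 0 < μ) (hLm : 0 ≤ Lm) (hρ : 1 ≤ ρ)
    (t : ℕ)
    (A : EuclideanSpace ℝ (Fin N) →L[ℝ] EuclideanSpace ℝ (Fin p)) (hA : A ≠ 0)
    (k₀ : ℝ) (hk₀ : k₀ = 4 / θ + 2 * Lm / (θ * μ))
    (β ρseq η : ℕ → ℝ)
    (hβ : ∀ k : ℕ, 1 ≤ k → β k = μ * (θ * k + 2 + θ) / (2 * ρ * ‖A‖ ^ 2))
    (hρ1 : ∀ k : ℕ, 1 ≤ k → k ≤ t - 1 → ρseq k = θ * β k / (6 - 5 * θ))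
    (hρt : ρseq t = ((t : ℝ) + k₀ + 1) * ρseq (t - 1) / (θ * ((t : ℝ) + k₀ + 1) - 1))
    (hη : ∀ k : ℕ, 1 ≤ k → η k = ρ * β k * ‖A‖ ^ 2 + Lm) :
    (∀ k : ℕ, 2 ≤ k → 1 ≤ θ * ((k : ℝ) + k₀ + 1)) ∧
    (∀ k : ℕ, 2 ≤ k → k ≤ t →
      (1 - θ) * ((k : ℝ) + k₀ + 1) * β k ≤ (β (k - 1) - ρseq (k - 1)) * ((k : ℝ) + k₀)) ∧
    (∀ k : ℕ, 2 ≤ k → k ≤ t - 1 →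
      (θ * ((k : ℝ) + k₀ + 2) - 1) / ρseq k ≤ (θ * ((k : ℝ) + k₀ + 1) - 1) / ρseq (k - 1)) ∧
    (((t : ℝ) + k₀ + 1) / ρseq t ≤ (θ * ((t : ℝ) + k₀ + 1) - 1) / ρseq (t - 1)) ∧
    (∀ k : ℕ, 2 ≤ k → k ≤ t →
      β (k - 1) * ((k : ℝ) + k₀) ≤ β k * ((k : ℝ) + k₀ + 1)) ∧
    (∀ k : ℕ, 1 ≤ k → k ≤ t → ∀ v : EuclideanSpace ℝ (Fin N),
      β k * ((k : ℝ) + k₀ + 1) * ‖A v‖ ^ 2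
        ≤ ((k : ℝ) + k₀ + 1) * (η k - Lm) * ‖v‖ ^ 2) ∧
    (∀ k : ℕ, 2 ≤ k → k ≤ t →
      ((k : ℝ) + k₀ + 1) * η k
        ≤ ((k : ℝ) + k₀) * η (k - 1) + μ * (θ * ((k : ℝ) + k₀ + 1) - 1)) := by
  have hθ0 : 0 < θ := by
    rw [hθ]
    exact div_pos (by exact_mod_cast hm) (by exact_mod_cast hm.trans hmM)
  have hθ1 : θ ≤ 1 := by
    rw [hθ]
    exact div_le_one_of_le₀ (by exact_mod_cast hmM) M.cast_nonneg
  have hA0 : 0 < ‖A‖ := norm_pos_iff.mpr hA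
  have hc : 0 < μ / (2 * ρ * ‖A‖ ^ 2) := by positivity
  have hβc : ∀ k : ℕ, 1 ≤ k → β k = μ / (2 * ρ * ‖A‖ ^ 2) * (θ * k + 2 + θ) := fun k hk => by
    rw [hβ k hk, div_mul_eq_mul_div, mul_comm]
  have hθk₀ : θ * k₀ = 4 + 2 * Lm / μ := by
    rw [hk₀]
    field_simp
  have h4 : 4 ≤ θ * k₀ := by
    rw [hθk₀]
    linarith [show 0 ≤ 2 * Lm / μ by positivity]
  have hk₀0 : 0 < k₀ := pos_of_mul_pos_right (by linarith) hθ0.le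
  refine ⟨fun k _ => by nlinarith [mul_nonneg hθ0.le k.cast_nonneg],
    fun k hk hkt => one_sub_mul_beta_le hθ0.le hθ1 hc.le h4 hβc hρ1 hk hkt,
    fun k hk hkt => div_rho_le_div_rho_sub_one hθ0 hθ1 hc h4 hβc hρ1 hk hkt, ?_,
    fun k hk _ => beta_sub_one_mul_le hθ0.le hc.le hk₀0.le hβc hk, ?_,
    fun k hk _ => mul_eta_le hμ hθ0.le hθk₀ (by field_simp) hβc hη hk⟩
  · have ht : (t : ℝ) + k₀ + 1 ≠ 0 := by positivity
    rw [hρt, div_div_eq_mul_div, mul_div_mul_left _ _ ht]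
  · intro k hk _ v
    rw [hη k hk, add_sub_cancel_right]
    have hb : 0 ≤ β k * ((k : ℝ) + k₀ + 1) :=
      mul_nonneg (beta_pos hθ0.le hc hβc hk).le (by positivity)
    exact (mul_norm_apply_sq_le A hρ hb v).trans_eq (by ring)

/-- Proposition 3.4 of the paper (the specific parameters satisfy (4.4)). -/
theorem stmt_8
    {M m p N : ℕ} (hm : 1 ≤ m) (hmM : m ≤ M)
    (θ : ℝ) (hθ : θ = (m : ℝ) / M)
    (μ Lm ρ : ℝ) (hμ : 0 < μ) (hLm : 0 ≤ Lm) (hρ : 1 ≤ ρ)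
    (t : ℕ) (ht : 2 ≤ t)
    (A : EuclideanSpace ℝ (Fin N) →L[ℝ] EuclideanSpace ℝ (Fin p)) (hA : A ≠ 0)
    (k₀ : ℝ) (hk₀ : k₀ = 4 / θ + 2 * Lm / (θ * μ))
    (β ρseq η : ℕ → ℝ)
    (hβ : ∀ k : ℕ, 1 ≤ k → β k = μ * (θ * k + 2 + θ) / (2 * ρ * ‖A‖ ^ 2))
    (hρ1 : ∀ k : ℕ, 1 ≤ k → k ≤ t - 1 → ρseq k = θ * β k / (6 - 5 * θ))
    (hρt : ρseq t = ((t : ℝ) + k₀ + 1) * ρseq (t - 1) / (θ * ((t : ℝ) + k₀ + 1) - 1))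
    (hη : ∀ k : ℕ, 1 ≤ k → η k = ρ * β k * ‖A‖ ^ 2 + Lm) :
    (∀ k : ℕ, 2 ≤ k → 1 ≤ θ * ((k : ℝ) + k₀ + 1)) ∧
    (∀ k : ℕ, 2 ≤ k → k ≤ t →
      (1 - θ) * ((k : ℝ) + k₀ + 1) * β k ≤ (β (k - 1) - ρseq (k - 1)) * ((k : ℝ) + k₀)) ∧
    (∀ k : ℕ, 2 ≤ k → k ≤ t - 1 →
      (θ * ((k : ℝ) + k₀ + 2) - 1) / ρseq k ≤ (θ * ((k : ℝ) + k₀ + 1) - 1) / ρseq (k - 1)) ∧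
    (((t : ℝ) + k₀ + 1) / ρseq t ≤ (θ * ((t : ℝ) + k₀ + 1) - 1) / ρseq (t - 1)) ∧
    (∀ k : ℕ, 2 ≤ k → k ≤ t →
      β (k - 1) * ((k : ℝ) + k₀) ≤ β k * ((k : ℝ) + k₀ + 1)) ∧
    (∀ k : ℕ, 1 ≤ k → k ≤ t → ∀ v : EuclideanSpace ℝ (Fin N),
      β k * ((k : ℝ) + k₀ + 1) * ‖A v‖ ^ 2
        ≤ ((k : ℝ) + k₀ + 1) * (η k - Lm) * ‖v‖ ^ 2) ∧
    (∀ k : ℕ, 2 ≤ k → k ≤ t →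
      ((k : ℝ) + k₀ + 1) * η k
        ≤ ((k : ℝ) + k₀) * η (k - 1) + μ * (θ * ((k : ℝ) + k₀ + 1) - 1)) :=
  stmt_8_general hm hmM θ hθ μ Lm ρ hμ hLm hρ t A hA k₀ hk₀ β ρseq η hβ hρ1 hρt hη
end

section
/- Let A be a real p×N matrix, t ≥ 1 an integer, θ ∈ (0,1], μ ≥ 0, L_m ≥ 0, k₀ ≥ 0, and real sequences (β_k)_{k≥1} with β_k ≥ 0 and (η_k)_{k≥1} satisfying: β_k(k+k₀+1) ≥ β_{k−1}(k+k₀) for all 2 ≤ k ≤ t; (k+k₀+1)(η_k − L_m) I ⪰ β_k(k+k₀+1) AᵀA for all 1 ≤ k ≤ t; and (k+k₀)η_{k−1} + μ(θ(k+k₀+1) − 1) ≥ (k+k₀+1)η_k for all 2 ≤ k ≤ t. Then for any vectors x¹, …, x^{t+1}, x ∈ ℝ^N: −∑_{k=1}^t (k+k₀+1)( Δ_{η_k I − β_k AᵀA}(x^{k+1}, x^k, x) − (L_m/2)‖x^{k+1} − x^k‖² ) − (μ(t+k₀+1)/2)‖x^{t+1} − x‖² − ∑_{k=2}^t (μ(θ(k+k₀+1)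 − 1)/2)‖x^k − x‖² ≤ (η₁(k₀+2)/2)‖x¹ − x‖² − ((t+k₀+1)/2)‖x^{t+1} − x‖²_{(μ+η_t) I − β_t AᵀA}. -/
/-!
Write `c k = k + k₀ + 1`, `e j = x j - xx`, and `q k` for the `(η k I - β k AᵀA)`-form. The
hypothesis on `A` says `q k d ≥ Lm ‖d‖²`, so dropping the term `q k (x (k+1) - x k)` from each
three-point expression leaves `½ (c k q k (e k) - c k q k (e (k+1)))`. Summed over `k` this
telescopes, up to the increments `c k q k (e k) - c (k-1) q (k-1) (e k)`, which the monotonicity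
hypotheses on `β` and `η` bound by `μ (θ c k - 1) ‖e k‖²`; these cancel the last sum on the left.
What remains are the two end terms, and in the first one the nonnegative `β 1` part is discarded.
-/

open Finset

theorem Finset.sum_Icc_sub_eq_add_sum_Icc {M : Type*} [AddCommGroup M] (a : ℕ → ℕ → M) {t : ℕ}
    (ht : 1 ≤ t) :
    ∑ k ∈ Icc 1 t, (a k k - a k (k + 1))
      = a 1 1 - a t (t + 1) + ∑ k ∈ Icc 2 t, (a k k - a (k - 1) k) := by
  induction t, ht using Nat.le_induction with
  | base => simp
  | succ t ht ih =>
    rw [sum_Icc_succ_top (by omega), sum_Icc_succ_top (by omega), ih, Nat.add_sub_cancel]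
    abel

theorem neg_mul_three_point_sub_le {E : Type*} [SeminormedAddCommGroup E] (q : E → ℝ)
    {c L : ℝ} (hc : 0 ≤ c) {w v₀ : E} (hq : L * ‖w - v₀‖ ^ 2 ≤ q (w - v₀)) (v : E) :
    -(c * (1 / 2 * (q (w - v) - q (v₀ - v) + q (w - v₀)) - L / 2 * ‖w - v₀‖ ^ 2))
      ≤ 1 / 2 * (c * q (v₀ - v) - c * q (w - v)) := by
  linarith [mul_le_mul_of_nonneg_left hq hc]

theorem mul_le_mul_sub_mul_of_mul_le {c η β L n a : ℝ} (hc : 0 < c)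
    (h : β * c * a ≤ c * (η - L) * n) : L * n ≤ η * n - β * a := by
  have : c * (L * n) ≤ c * (η * n - β * a) := by linarith
  exact le_of_mul_le_mul_left this hc

theorem mul_sub_mul_sub_le {c c' η η' β β' m n a : ℝ} (hn : 0 ≤ n) (ha : 0 ≤ a)
    (hη : c * η ≤ c' * η' + m) (hβ : β' * c' ≤ β * c) :
    c * (η * n - β * a) - c' * (η' * n - β' * a) ≤ m * n := by
  linarith [mul_le_mul_of_nonneg_right hη hn, mul_le_mul_of_nonneg_right hβ ha]

theorem stmt_9_general
    {p N : ℕ}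
    (A : EuclideanSpace ℝ (Fin N) →L[ℝ] EuclideanSpace ℝ (Fin p))
    (t : ℕ) (ht : 1 ≤ t)
    (θ : ℝ)
    (μ Lm k₀ : ℝ) (hk₀ : 0 ≤ k₀)
    (β η : ℕ → ℝ) (hβnn : ∀ k, 0 ≤ β k)
    (hβmono : ∀ k : ℕ, 2 ≤ k → k ≤ t →
      β (k - 1) * ((k : ℝ) + k₀) ≤ β k * ((k : ℝ) + k₀ + 1))
    (hmat : ∀ k : ℕ, 1 ≤ k → k ≤ t → ∀ v : EuclideanSpace ℝ (Fin N),
      β k * ((k : ℝ) + k₀ + 1) * ‖A v‖ ^ 2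
        ≤ ((k : ℝ) + k₀ + 1) * (η k - Lm) * ‖v‖ ^ 2)
    (hηmono : ∀ k : ℕ, 2 ≤ k → k ≤ t →
      ((k : ℝ) + k₀ + 1) * η k
        ≤ ((k : ℝ) + k₀) * η (k - 1) + μ * (θ * ((k : ℝ) + k₀ + 1) - 1))
    (q : ℕ → EuclideanSpace ℝ (Fin N) → ℝ)
    (hq : ∀ k u, q k u = η k * ‖u‖ ^ 2 - β k * ‖A u‖ ^ 2)
    (x : ℕ → EuclideanSpace ℝ (Fin N)) (xx : EuclideanSpace ℝ (Fin N)) :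
    -(∑ k ∈ Finset.Icc 1 t, ((k : ℝ) + k₀ + 1) *
          (1 / 2 * (q k (x (k + 1) - xx) - q k (x k - xx) + q k (x (k + 1) - x k))
            - Lm / 2 * ‖x (k + 1) - x k‖ ^ 2))
      - μ * ((t : ℝ) + k₀ + 1) / 2 * ‖x (t + 1) - xx‖ ^ 2
      - (∑ k ∈ Finset.Icc 2 t, μ * (θ * ((k : ℝ) + k₀ + 1) - 1) / 2 * ‖x k - xx‖ ^ 2)
    ≤ η 1 * (k₀ + 2) / 2 * ‖x 1 - xx‖ ^ 2
      - ((t : ℝ) + k₀ + 1) / 2 *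
          ((μ + η t) * ‖x (t + 1) - xx‖ ^ 2 - β t * ‖A (x (t + 1) - xx)‖ ^ 2) := by
  have hc (k : ℕ) : 0 < (k : ℝ) + k₀ + 1 := by positivity
  set a : ℕ → ℕ → ℝ := fun k j => ((k : ℝ) + k₀ + 1) * q k (x j - xx) with ha
  have hsteps : -(∑ k ∈ Icc 1 t, ((k : ℝ) + k₀ + 1) *
        (1 / 2 * (q k (x (k + 1) - xx) - q k (x k - xx) + q k (x (k + 1) - x k))
          - Lm / 2 * ‖x (k + 1) - x k‖ ^ 2)) ≤ 1 / 2 * ∑ k ∈ Icc 1 t, (a k k - a k (k + 1)) := by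
    rw [← sum_neg_distrib, mul_sum]
    refine sum_le_sum fun k hk => neg_mul_three_point_sub_le (q k) (hc k).le ?_ xx
    rw [hq]
    exact mul_le_mul_sub_mul_of_mul_le (hc k) (hmat k (mem_Icc.mp hk).1 (mem_Icc.mp hk).2 _)
  have hgrowth : 1 / 2 * ∑ k ∈ Icc 2 t, (a k k - a (k - 1) k)
      ≤ ∑ k ∈ Icc 2 t, μ * (θ * ((k : ℝ) + k₀ + 1) - 1) / 2 * ‖x k - xx‖ ^ 2 := by
    rw [mul_sum]
    refine sum_le_sum fun k hk => ?_
    obtain ⟨hk2, hkt⟩ := mem_Icc.mp hk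
    have hcast : ((k - 1 : ℕ) : ℝ) + k₀ + 1 = k + k₀ := by
      rw [Nat.cast_sub (by omega)]; ring
    simp only [ha, hcast, hq]
    linarith [mul_sub_mul_sub_le (sq_nonneg ‖x k - xx‖) (sq_nonneg ‖A (x k - xx)‖)
      (hηmono k hk2 hkt) (hβmono k hk2 hkt)]
  have hfirst : a 1 1 ≤ η 1 * (k₀ + 2) * ‖x 1 - xx‖ ^ 2 := by
    simp only [ha, hq]; push_cast
    nlinarith [mul_nonneg (mul_nonneg (hβnn 1) (hc 1).le) (sq_nonneg ‖A (x 1 - xx)‖)]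
  have hlast : a t (t + 1) = ((t : ℝ) + k₀ + 1) *
      (η t * ‖x (t + 1) - xx‖ ^ 2 - β t * ‖A (x (t + 1) - xx)‖ ^ 2) := by
    simp only [ha, hq]
  rw [sum_Icc_sub_eq_add_sum_Icc a ht] at hsteps
  linarith

/-- Proposition B.1 of the paper. -/
theorem stmt_9
    {p N : ℕ}
    (A : EuclideanSpace ℝ (Fin N) →L[ℝ] EuclideanSpace ℝ (Fin p))
    (t : ℕ) (ht : 1 ≤ t)
    (θ : ℝ) (hθ0 : 0 < θ) (hθ1 : θ ≤ 1)
    (μ Lm k₀ : ℝ) (hμ : 0 ≤ μ) (hLm : 0 ≤ Lm) (hk₀ : 0 ≤ k₀)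
    (β η : ℕ → ℝ) (hβnn : ∀ k, 0 ≤ β k)
    (hβmono : ∀ k : ℕ, 2 ≤ k → k ≤ t →
      β (k - 1) * ((k : ℝ) + k₀) ≤ β k * ((k : ℝ) + k₀ + 1))
    (hmat : ∀ k : ℕ, 1 ≤ k → k ≤ t → ∀ v : EuclideanSpace ℝ (Fin N),
      β k * ((k : ℝ) + k₀ + 1) * ‖A v‖ ^ 2
        ≤ ((k : ℝ) + k₀ + 1) * (η k - Lm) * ‖v‖ ^ 2)
    (hηmono : ∀ k : ℕ, 2 ≤ k → k ≤ t →
      ((k : ℝ) + k₀ + 1) * η k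
        ≤ ((k : ℝ) + k₀) * η (k - 1) + μ * (θ * ((k : ℝ) + k₀ + 1) - 1))
    (q : ℕ → EuclideanSpace ℝ (Fin N) → ℝ)
    (hq : ∀ k u, q k u = η k * ‖u‖ ^ 2 - β k * ‖A u‖ ^ 2)
    (x : ℕ → EuclideanSpace ℝ (Fin N)) (xx : EuclideanSpace ℝ (Fin N)) :
    -(∑ k ∈ Finset.Icc 1 t, ((k : ℝ) + k₀ + 1) *
          (1 / 2 * (q k (x (k + 1) - xx) - q k (x k - xx) + q k (x (k + 1) - x k))
            - Lm / 2 * ‖x (k + 1) - x k‖ ^ 2))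
      - μ * ((t : ℝ) + k₀ + 1) / 2 * ‖x (t + 1) - xx‖ ^ 2
      - (∑ k ∈ Finset.Icc 2 t, μ * (θ * ((k : ℝ) + k₀ + 1) - 1) / 2 * ‖x k - xx‖ ^ 2)
    ≤ η 1 * (k₀ + 2) / 2 * ‖x 1 - xx‖ ^ 2
      - ((t : ℝ) + k₀ + 1) / 2 *
          ((μ + η t) * ‖x (t + 1) - xx‖ ^ 2 - β t * ‖A (x (t + 1) - xx)‖ ^ 2) :=
  stmt_9_general A t ht θ μ Lm k₀ hk₀ β η hβnn hβmono hmat hηmono q hq x xx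
end
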